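/- arXiv:0901.0686 — 7 statements merged into one kernel-verified Lean document; each statement's English description precedes it below -/
import Mathlib

section
/- Let k be a field and let g ∈ k[x_1,…,x_d] factor as g = h·q where h is irreducible and h does not divide q. Suppose the hypersurface ring R = k[z,x_1,…,x_d]/(z^n − g) (n ≥ 1) is a normal domain. Then the ideal of R generated by the images of z and h is a prime ideal of height one. -/
/-!
For a prime `p` of `A`, the ideal `(X, p)` of `A[X]` is the preimage of `(p)` under the constant
coefficient map, hence prime. When `p ∣ g` it contains `Xⁿ - g`, and it is minimal over
`(Xⁿ - g, p)`: a prime containing `p` contains `g`, hence `Xⁿ`, hence `X`. So its image in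
`A[X]/(Xⁿ - g)` is a prime minimal over the principal ideal `(p)`, of height at most one by
Krull's principal ideal theorem, and it is nonzero because the monic polynomial `Xⁿ - g` of
positive degree does not divide the constant `p`.
-/

namespace Polynomial

variable {A : Type*} [CommRing A]

theorem span_X_C_eq_comap_constantCoeff (a : A) :
    Ideal.span {X, C a} = (Ideal.span {a}).comap (constantCoeff : A[X] →+* A) := by
  apply le_antisymm
  · rw [Ideal.span_le]
    rintro F (rfl | rfl) <;> simp
  · intro F hF
    obtain ⟨c, hc⟩ := Ideal.mem_span_singleton.mp hF
    change F.coeff 0 = a * c at hc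
    rw [← X_mul_divX_add F, hc, C_mul]
    exact Ideal.add_mem _ (Ideal.mul_mem_right _ _ (Ideal.subset_span (by simp)))
      (Ideal.mul_mem_right _ _ (Ideal.subset_span (by simp)))

theorem isPrime_span_X_C {p : A} (hp : Prime p) : (Ideal.span {X, C p} : Ideal A[X]).IsPrime := by
  have := (Ideal.span_singleton_prime hp.ne_zero).mpr hp
  rw [span_X_C_eq_comap_constantCoeff]
  exact Ideal.IsPrime.comap _

variable {n : ℕ} {p g : A}

theorem span_X_C_mem_minimalPrimes (hn : n ≠ 0) (hp : Prime p) (hpg : p ∣ g) :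
    Ideal.span {X, C p} ∈ (Ideal.span {X ^ n - C g} ⊔ Ideal.span {C p}).minimalPrimes := by
  have hC_mem {Q : Ideal A[X]} (hpQ : C p ∈ Q) : C g ∈ Q := by
    obtain ⟨c, rfl⟩ := hpg
    rw [C_mul]
    exact Q.mul_mem_right _ hpQ
  have hX : X ∈ Ideal.span {X, C p} := Ideal.subset_span (by simp)
  have hCp : C p ∈ Ideal.span {X, C p} := Ideal.subset_span (by simp)
  refine ⟨⟨isPrime_span_X_C hp, sup_le ?_ ?_⟩, fun Q ⟨hQ, hQle⟩ _ ↦ ?_⟩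
  · rw [Ideal.span_singleton_le_iff_mem]
    exact sub_mem (Ideal.pow_mem_of_mem _ hX n (Nat.pos_of_ne_zero hn)) (hC_mem hCp)
  · rwa [Ideal.span_singleton_le_iff_mem]
  · have hpQ : C p ∈ Q := le_sup_right.trans hQle (Ideal.mem_span_singleton_self _)
    have hXQ : X ∈ Q := hQ.mem_of_pow_mem n <| by
      simpa using Q.add_mem (le_sup_left.trans hQle (Ideal.mem_span_singleton_self _))
        (hC_mem hpQ)
    rw [Ideal.span_le]
    rintro F (rfl | rfl)
    exacts [hXQ, hpQ]

theorem span_X_C_not_le_span_X_pow_sub_C (hn : n ≠ 0) (hp : Prime p) :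
    ¬ Ideal.span {X, C p} ≤ Ideal.span {X ^ n - C g} := by
  have : Nontrivial A := nontrivial_of_ne p 0 hp.ne_zero
  intro hle
  have hCp : C p ∈ Ideal.span {X ^ n - C g} := hle (Ideal.subset_span (by simp))
  refine (monic_X_pow_sub_C g hn).not_dvd_of_natDegree_lt (C_ne_zero.mpr hp.ne_zero) ?_
    (Ideal.mem_span_singleton.mp hCp)
  rw [natDegree_C, natDegree_X_pow_sub_C]
  omega

local notation "π" => Ideal.Quotient.mk (Ideal.span {(X : A[X]) ^ n - C g})

theorem isPrime_map_span_X_C (hn : n ≠ 0) (hp : Prime p) (hpg : p ∣ g) :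
    ((Ideal.span {X, C p}).map π).IsPrime :=
  have := isPrime_span_X_C hp
  Ideal.map_isPrime_of_surjective Ideal.Quotient.mk_surjective <| by
    rw [Ideal.mk_ker]
    exact le_sup_left.trans (span_X_C_mem_minimalPrimes hn hp hpg).1.2

theorem height_map_span_X_C_eq_one [IsNoetherianRing A]
    [IsDomain (A[X] ⧸ Ideal.span {X ^ n - C g})] (hn : n ≠ 0) (hp : Prime p) (hpg : p ∣ g) :
    ((Ideal.span {X, C p}).map π).height = 1 := by
  have := isPrime_map_span_X_C hn hp hpg
  have hne : (Ideal.span {X, C p}).map π ≠ ⊥ := by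
    rw [Ne, Ideal.map_eq_bot_iff_le_ker, Ideal.mk_ker]
    exact span_X_C_not_le_span_X_pow_sub_C hn hp
  rcases Order.le_one_iff.mp
    (Ideal.map_height_le_one_of_mem_minimalPrimes (span_X_C_mem_minimalPrimes hn hp hpg))
    with h0 | h1
  · exact absurd (Ideal.height_eq_zero_iff_eq_bot.mp h0) hne
  · exact h1

theorem exists_isPrime_span_mk_X_mk_C_and_height_eq_one [IsNoetherianRing A]
    [IsDomain (A[X] ⧸ Ideal.span {X ^ n - C g})] (hn : n ≠ 0) (hp : Prime p) (hpg : p ∣ g) :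
    ∃ hP : (Ideal.span {π X, π (C p)}).IsPrime,
      Order.height (⟨_, hP⟩ : PrimeSpectrum (A[X] ⧸ Ideal.span {X ^ n - C g})) = 1 := by
  rw [← Set.image_pair, ← Ideal.map_span]
  exact ⟨isPrime_map_span_X_C hn hp hpg,
    (PrimeSpectrum.height_eq_orderHeight _).symm.trans (height_map_span_X_C_eq_one hn hp hpg)⟩

end Polynomial

theorem divisor_class_stmt_1_general {k : Type*} [Field k] {d n : ℕ} (hn : 1 ≤ n)
    (g h q : MvPolynomial (Fin d) k) (hirr : Irreducible h) (hg : g = h * q)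
    [IsDomain (Polynomial (MvPolynomial (Fin d) k) ⧸
      Ideal.span {Polynomial.X ^ n - Polynomial.C g})] :
    ∃ hp : (Ideal.span
        {Ideal.Quotient.mk (Ideal.span {Polynomial.X ^ n - Polynomial.C g}) Polynomial.X,
         Ideal.Quotient.mk (Ideal.span {Polynomial.X ^ n - Polynomial.C g}) (Polynomial.C h)} :
        Ideal (Polynomial (MvPolynomial (Fin d) k) ⧸
          Ideal.span {Polynomial.X ^ n - Polynomial.C g})).IsPrime,
      Order.height (⟨_, hp⟩ : PrimeSpectrum (Polynomial (MvPolynomial (Fin d) k) ⧸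
        Ideal.span {Polynomial.X ^ n - Polynomial.C g})) = 1 :=
  Polynomial.exists_isPrime_span_mk_X_mk_C_and_height_eq_one (Nat.one_le_iff_ne_zero.mp hn)
    hirr.prime (hg ▸ dvd_mul_right h q)

/-- Let `k` be a field and let `g ∈ k[x_1,…,x_d]` factor as `g = h·q` where
`h` is irreducible and `h ∤ q`.  Suppose the hypersurface ring
`R = k[z,x_1,…,x_d]/(zⁿ − g)` (with `n ≥ 1`) is a normal domain (a domain that is integrally
closed in its fraction field).  Then the ideal of `R` generated by the images of `z` and `h`
is a prime ideal of height one.  Here we realize `k[z,x_1,…,x_d]` as the polynomial ring in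
`z` over `k[x_1,…,x_d]`, so that `z = Polynomial.X` and `h` is included via `Polynomial.C`. -/
theorem divisor_class_stmt_1 {k : Type*} [Field k] {d n : ℕ} (hn : 1 ≤ n)
    (g h q : MvPolynomial (Fin d) k) (hirr : Irreducible h) (hnd : ¬ h ∣ q) (hg : g = h * q)
    [IsDomain (Polynomial (MvPolynomial (Fin d) k) ⧸
      Ideal.span {Polynomial.X ^ n - Polynomial.C g})]
    [IsIntegrallyClosed (Polynomial (MvPolynomial (Fin d) k) ⧸
      Ideal.span {Polynomial.X ^ n - Polynomial.C g})] :
    ∃ hp : (Ideal.span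
        {Ideal.Quotient.mk (Ideal.span {Polynomial.X ^ n - Polynomial.C g}) Polynomial.X,
         Ideal.Quotient.mk (Ideal.span {Polynomial.X ^ n - Polynomial.C g}) (Polynomial.C h)} :
        Ideal (Polynomial (MvPolynomial (Fin d) k) ⧸
          Ideal.span {Polynomial.X ^ n - Polynomial.C g})).IsPrime,
      Order.height (⟨_, hp⟩ : PrimeSpectrum (Polynomial (MvPolynomial (Fin d) k) ⧸
        Ideal.span {Polynomial.X ^ n - Polynomial.C g})) = 1 :=
  divisor_class_stmt_1_general hn g h q hirr hg
end

section
/- Let k be a field and let g ∈ k[x_1,…,x_d] factor as g = h·q where h is irreducible and h does not divide q. Suppose R = k[z,x_1,…,x_d]/(z^n − g) (n ≥ 1) is a normal domain, and let 𝔭 = (z, h)R, a prime ideal of R. Then in the localization R_𝔭 of R at 𝔭, the ideal generated by the image of h equals the ideal generated by the image of z^n; that is, h·R_𝔭 = z^n·R_𝔭. -/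
/-!
In `R` we have `zⁿ = hq`. Reducing modulo `z` shows that `q ∈ (z, h)` would force `h ∣ q`, so
`q ∉ 𝔭` becomes a unit in `R_𝔭`, and `h` and `zⁿ = hq` generate the same ideal there.
-/

open Polynomial

namespace Polynomial

variable {A : Type*} [CommRing A]

theorem C_mem_span_X_C_iff {a b : A} : C b ∈ Ideal.span {X, C a} ↔ a ∣ b := by
  constructor
  · intro hb
    have h0 := Ideal.mem_map_of_mem (evalRingHom 0) hb
    rw [Ideal.map_span, Set.image_pair] at h0
    simpa [Ideal.span_insert_zero, Ideal.mem_span_singleton] using h0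
  · rintro ⟨c, rfl⟩
    rw [C_mul]
    exact Ideal.mul_mem_right _ _ (Ideal.subset_span (by simp))

theorem X_pow_sub_C_mul_mem_span_X_C {n : ℕ} (hn : n ≠ 0) (a b : A) :
    X ^ n - C (a * b) ∈ Ideal.span {X, C a} := by
  have hX : (X : A[X]) ∈ Ideal.span {X, C a} := Ideal.subset_span (by simp)
  have hCa : C a ∈ Ideal.span {(X : A[X]), C a} := Ideal.subset_span (by simp)
  rw [C_mul]
  exact Ideal.sub_mem _ (Ideal.pow_mem_of_mem _ hX n (Nat.pos_of_ne_zero hn))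
    (Ideal.mul_mem_right _ _ hCa)

theorem dvd_of_mk_C_mem_span_mk_X_mk_C {n : ℕ} (hn : n ≠ 0) {a b : A}
    (hb : Ideal.Quotient.mk (Ideal.span {X ^ n - C (a * b)}) (C b) ∈
      Ideal.span {Ideal.Quotient.mk (Ideal.span {X ^ n - C (a * b)}) X,
        Ideal.Quotient.mk (Ideal.span {X ^ n - C (a * b)}) (C a)}) :
    a ∣ b := by
  have hle : Ideal.span {X ^ n - C (a * b)} ≤ Ideal.span {X, C a} :=
    Ideal.span_le.mpr (by simpa using X_pow_sub_C_mul_mem_span_X_C hn a b)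
  rw [← Set.image_pair, ← Ideal.map_span, Ideal.mem_quotient_iff_mem hle] at hb
  exact C_mem_span_X_C_iff.mp hb

end Polynomial

theorem Localization.AtPrime.span_algebraMap_mul_of_not_mem {R : Type*} [CommRing R]
    (𝔭 : Ideal R) [𝔭.IsPrime] (a : R) {b : R} (hb : b ∉ 𝔭) :
    Ideal.span {algebraMap R (Localization.AtPrime 𝔭) (a * b)} =
      Ideal.span {algebraMap R (Localization.AtPrime 𝔭) a} := by
  rw [map_mul]
  exact Ideal.span_singleton_mul_right_unit
    (IsLocalization.map_units (Localization.AtPrime 𝔭) (⟨b, hb⟩ : 𝔭.primeCompl)) _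

theorem divisor_class_stmt_3_general {k : Type*} [Field k] {d n : ℕ} (hn : 1 ≤ n)
    (g h q : MvPolynomial (Fin d) k) (hnd : ¬ h ∣ q) (hg : g = h * q)
    [hp : (Ideal.span
        {Ideal.Quotient.mk (Ideal.span {Polynomial.X ^ n - Polynomial.C g}) Polynomial.X,
         Ideal.Quotient.mk (Ideal.span {Polynomial.X ^ n - Polynomial.C g}) (Polynomial.C h)} :
        Ideal (Polynomial (MvPolynomial (Fin d) k) ⧸
          Ideal.span {Polynomial.X ^ n - Polynomial.C g})).IsPrime] :
    Ideal.span
        {@algebraMap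
          (Polynomial (MvPolynomial (Fin d) k) ⧸
            Ideal.span {Polynomial.X ^ n - Polynomial.C g})
          (Localization.AtPrime (Ideal.span
            {Ideal.Quotient.mk (Ideal.span {Polynomial.X ^ n - Polynomial.C g}) Polynomial.X,
             Ideal.Quotient.mk (Ideal.span {Polynomial.X ^ n - Polynomial.C g})
               (Polynomial.C h)})) inferInstance inferInstance _
          (Ideal.Quotient.mk (Ideal.span {Polynomial.X ^ n - Polynomial.C g})
            (Polynomial.C h))} =
      Ideal.span
        {@algebraMap
          (Polynomial (MvPolynomial (Fin d) k) ⧸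
            Ideal.span {Polynomial.X ^ n - Polynomial.C g})
          (Localization.AtPrime (Ideal.span
            {Ideal.Quotient.mk (Ideal.span {Polynomial.X ^ n - Polynomial.C g}) Polynomial.X,
             Ideal.Quotient.mk (Ideal.span {Polynomial.X ^ n - Polynomial.C g})
               (Polynomial.C h)})) inferInstance inferInstance _
          (Ideal.Quotient.mk (Ideal.span {Polynomial.X ^ n - Polynomial.C g})
            (Polynomial.X ^ n))} := by
  subst hg
  have hq_not_mem := mt (dvd_of_mk_C_mem_span_mk_X_mk_C (Nat.one_le_iff_ne_zero.mp hn)) hnd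
  have hz : Ideal.Quotient.mk (Ideal.span {X ^ n - C (h * q)}) (X ^ n) =
      Ideal.Quotient.mk _ (C h) * Ideal.Quotient.mk _ (C q) := by
    rw [← map_mul, ← C_mul, Ideal.Quotient.eq]
    exact Ideal.subset_span rfl
  rw [hz, Localization.AtPrime.span_algebraMap_mul_of_not_mem _ _ hq_not_mem]

/-- Let `k` be a field and let `g ∈ k[x_1,…,x_d]` factor as `g = h·q` with
`h` irreducible and `h ∤ q`.  Suppose `R = k[z,x_1,…,x_d]/(zⁿ − g)` (`n ≥ 1`) is a normal
domain, and let `𝔭 = (z,h)R`, a prime ideal of `R`.  Then in the localization `R_𝔭` the ideal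
generated by the image of `h` equals the ideal generated by the image of `zⁿ`:
`h·R_𝔭 = zⁿ·R_𝔭`.  Here `k[z,x_1,…,x_d]` is realized as the polynomial ring in `z` over
`k[x_1,…,x_d]`, so `z = Polynomial.X` and `h` is included via `Polynomial.C`. -/
theorem divisor_class_stmt_3 {k : Type*} [Field k] {d n : ℕ} (hn : 1 ≤ n)
    (g h q : MvPolynomial (Fin d) k) (hirr : Irreducible h) (hnd : ¬ h ∣ q) (hg : g = h * q)
    [IsDomain (Polynomial (MvPolynomial (Fin d) k) ⧸
      Ideal.span {Polynomial.X ^ n - Polynomial.C g})]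
    [IsIntegrallyClosed (Polynomial (MvPolynomial (Fin d) k) ⧸
      Ideal.span {Polynomial.X ^ n - Polynomial.C g})]
    [hp : (Ideal.span
        {Ideal.Quotient.mk (Ideal.span {Polynomial.X ^ n - Polynomial.C g}) Polynomial.X,
         Ideal.Quotient.mk (Ideal.span {Polynomial.X ^ n - Polynomial.C g}) (Polynomial.C h)} :
        Ideal (Polynomial (MvPolynomial (Fin d) k) ⧸
          Ideal.span {Polynomial.X ^ n - Polynomial.C g})).IsPrime] :
    Ideal.span
        {@algebraMap
          (Polynomial (MvPolynomial (Fin d) k) ⧸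
            Ideal.span {Polynomial.X ^ n - Polynomial.C g})
          (Localization.AtPrime (Ideal.span
            {Ideal.Quotient.mk (Ideal.span {Polynomial.X ^ n - Polynomial.C g}) Polynomial.X,
             Ideal.Quotient.mk (Ideal.span {Polynomial.X ^ n - Polynomial.C g})
               (Polynomial.C h)})) inferInstance inferInstance _
          (Ideal.Quotient.mk (Ideal.span {Polynomial.X ^ n - Polynomial.C g})
            (Polynomial.C h))} =
      Ideal.span
        {@algebraMap
          (Polynomial (MvPolynomial (Fin d) k) ⧸
            Ideal.span {Polynomial.X ^ n - Polynomial.C g})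
          (Localization.AtPrime (Ideal.span
            {Ideal.Quotient.mk (Ideal.span {Polynomial.X ^ n - Polynomial.C g}) Polynomial.X,
             Ideal.Quotient.mk (Ideal.span {Polynomial.X ^ n - Polynomial.C g})
               (Polynomial.C h)})) inferInstance inferInstance _
          (Ideal.Quotient.mk (Ideal.span {Polynomial.X ^ n - Polynomial.C g})
            (Polynomial.X ^ n))} :=
  divisor_class_stmt_3_general hn g h q hnd hg (hp := hp)
end

section
/- Let k be a field and let g ∈ k[x_1,…,x_d] be weighted homogeneous of degree m with respect to positive integer weights c_1,…,c_d on the variables, with m relatively prime to n and n ≥ 2. Suppose R = k[z,x_1,…,x_d]/(z^n − g) is a normal domain and g = h_1 ⋯ h_r is a factorization into irreducible polynomials with r ≥ 2. Then the ideal (z, h_1)R of R is not a principal ideal. -/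
/-!
Give `xᵢ` the weight `n cᵢ` and `z` the weight `m`. Then `zⁿ - g` is homogeneous, so `R` is graded,
and `z`, `h₁` are homogeneous (a factor of a weighted homogeneous polynomial is weighted
homogeneous). In a graded domain, a principal ideal generated by homogeneous elements has a
homogeneous generator `φ = ∑_{j<n} aⱼ zʲ`. Every monomial of `aⱼ zʲ` has degree `≡ m j (mod n)`, and
`m` is prime to `n`, so `φ` is either a constant `a ∈ k[x]` or a multiple of `z`. In the first case
`h₁ ∣ a` and `z ∈ (a, zⁿ - g)` force `h₁` to be a unit; in the second, `h₁ ∈ (φ, zⁿ - g)` forces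
`g ∣ h₁`, impossible as `r ≥ 2`.
-/

open Polynomial

namespace Polynomial

section Monomial

variable {R : Type*}

theorem eq_C_mul_X_pow_of_natTrailingDegree_eq_natDegree [Semiring R] {P : R[X]}
    (h : P.natTrailingDegree = P.natDegree) : P = C P.leadingCoeff * X ^ P.natDegree := by
  ext u
  rw [coeff_C_mul_X_pow]
  rcases lt_trichotomy u P.natDegree with hu | rfl | hu
  · rw [if_neg hu.ne, coeff_eq_zero_of_lt_natTrailingDegree (h ▸ hu)]
  · rw [if_pos rfl, leadingCoeff]
  · rw [if_neg hu.ne', coeff_eq_zero_of_natDegree_lt hu]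

theorem exists_eq_C_eval_one_mul_X_pow_of_mul_eq_C_mul_X_pow [CommSemiring R] [NoZeroDivisors R]
    {P Q : R[X]} {a : R} {M : ℕ} (ha : a ≠ 0) (h : P * Q = C a * X ^ M) :
    ∃ e, P = C (P.eval 1) * X ^ e := by
  classical
  rw [C_mul_X_pow_eq_monomial] at h
  have hPQ : P * Q ≠ 0 := by rw [h]; exact (monomial_eq_zero_iff _ _).not.mpr ha
  have hP : P ≠ 0 := left_ne_zero_of_mul hPQ
  have hQ : Q ≠ 0 := right_ne_zero_of_mul hPQ
  have hdeg := natDegree_mul hP hQ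
  have htr := natTrailingDegree_mul hP hQ
  rw [h, natDegree_monomial, if_neg ha] at hdeg
  rw [h, natTrailingDegree_monomial ha] at htr
  have hP' := eq_C_mul_X_pow_of_natTrailingDegree_eq_natDegree (P := P)
    (by have := natTrailingDegree_le_natDegree P; have := natTrailingDegree_le_natDegree Q; omega)
  refine ⟨P.natDegree, ?_⟩
  rw [hP', eval_mul, eval_C, eval_pow, eval_X, one_pow, mul_one, leadingCoeff,
    natDegree_C_mul_X_pow]
  exact leadingCoeff_ne_zero.mpr hP

theorem coeff_eval₂_C_comp_C_X_mul_X [CommSemiring R] (p : R[X]) (e : ℕ) :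
    (p.eval₂ (C.comp C) (C X * X)).coeff e = C (p.coeff e) * X ^ e := by
  simp only [eval₂_eq_sum, Polynomial.sum, finsetSum_coeff, RingHom.comp_apply, mul_pow, ← C_pow,
    ← mul_assoc, ← C_mul, coeff_C_mul_X_pow]
  rw [Finset.sum_ite_eq]
  split_ifs with he
  · rfl
  · rw [notMem_support_iff.mp he]; simp

end Monomial

variable {A : Type*} [CommRing A]

theorem eq_of_mk_eq_of_natDegree_lt {q p p' : A[X]} (hq : q.Monic)
    (hp : p.natDegree < q.natDegree) (hp' : p'.natDegree < q.natDegree)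
    (h : Ideal.Quotient.mk (Ideal.span {q}) p = Ideal.Quotient.mk (Ideal.span {q}) p') :
    p = p' := by
  rw [Ideal.Quotient.eq, Ideal.mem_span_singleton] at h
  by_contra hne
  exact hq.not_dvd_of_natDegree_lt (sub_ne_zero.mpr hne)
    ((natDegree_sub_le p p').trans_lt (max_lt hp hp')) h

theorem eq_of_map_mk_eq {q : A[X]} (hq : q.Monic) {P Q : A[X][X]}
    (hP : ∀ e, (P.coeff e).natDegree < q.natDegree)
    (hQ : ∀ e, (Q.coeff e).natDegree < q.natDegree)
    (h : P.map (Ideal.Quotient.mk (Ideal.span {q})) = Q.map (Ideal.Quotient.mk (Ideal.span {q}))) :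
    P = Q :=
  ext fun e =>
    eq_of_mk_eq_of_natDegree_lt hq (hP e) (hQ e) (by simpa using congr_arg (coeff · e) h)

theorem exists_natDegree_lt_mk_eq {q : A[X]} (hq : q.Monic) (hq0 : 0 < q.natDegree)
    (x : A[X] ⧸ Ideal.span {q}) :
    ∃ f : A[X], f.natDegree < q.natDegree ∧ Ideal.Quotient.mk (Ideal.span {q}) f = x := by
  obtain ⟨p, rfl⟩ := Ideal.Quotient.mk_surjective x
  refine ⟨p %ₘ q, natDegree_modByMonic_lt p hq ?_, ?_⟩
  · rintro rfl; simp at hq0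
  · rw [Ideal.Quotient.eq, Ideal.mem_span_singleton, modByMonic_eq_sub_mul_div]
    exact ⟨-(p /ₘ q), by ring⟩

theorem dvd_coeff_zero_of_mem_span {s : Set A[X]} {a : A} (hs : ∀ p ∈ s, a ∣ p.coeff 0)
    {p : A[X]} (hp : p ∈ Ideal.span s) : a ∣ p.coeff 0 := by
  induction hp using Submodule.span_induction with
  | mem p hp => exact hs p hp
  | zero => simp
  | add p p' _ _ hp hp' => simpa using dvd_add hp hp'
  | smul r p _ hp => simpa [mul_coeff_zero] using hp.mul_left _

theorem X_notMem_span_C_X_pow_sub_C {n : ℕ} (hn : 2 ≤ n) {a g : A} (ha : ¬IsUnit a)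
    (hag : a ∣ g) : X ∉ Ideal.span {C a, X ^ n - C g} := by
  rw [Ideal.mem_span_pair]
  rintro ⟨u, v, huv⟩
  obtain ⟨b, rfl⟩ := hag
  have h1 := congr_arg (coeff · 1) huv
  simp only [coeff_add, coeff_mul_C, mul_sub, coeff_sub, coeff_mul_X_pow',
    if_neg (show ¬n ≤ 1 by omega), coeff_X_one] at h1
  exact ha (isUnit_of_dvd_one ⟨u.coeff 1 - v.coeff 1 * b, by linear_combination -h1⟩)

theorem span_insert_X_C_ne_span_pair {n : ℕ} (hn : 2 ≤ n) {a g : A} (ha : ¬IsUnit a)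
    (hag : a ∣ g) (hga : ¬g ∣ a) {f : A[X]} (hf : f = C (f.coeff 0) ∨ f.coeff 0 = 0) :
    Ideal.span {X ^ n - C g, X, C a} ≠ Ideal.span {X ^ n - C g, f} := by
  intro h
  have hq : (X ^ n - C g : A[X]).coeff 0 = -g := by
    rw [coeff_sub, coeff_X_pow, if_neg (by omega), coeff_C_zero, zero_sub]
  rcases hf with hf | hf
  · have hfmem : f ∈ Ideal.span {X ^ n - C g, X, C a} := by
      rw [h]; exact Ideal.subset_span (by simp)
    obtain ⟨t, ht⟩ : a ∣ f.coeff 0 :=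
      dvd_coeff_zero_of_mem_span (by simp [hq, hag]) hfmem
    have hXmem : X ∈ Ideal.span {X ^ n - C g, f} := by
      rw [← h]; exact Ideal.subset_span (by simp)
    refine X_notMem_span_C_X_pow_sub_C hn ha hag (Ideal.span_le.mpr ?_ hXmem)
    refine Set.insert_subset_iff.mpr
      ⟨Ideal.subset_span (by simp), Set.singleton_subset_iff.mpr ?_⟩
    rw [SetLike.mem_coe, hf, ht, C_mul]
    exact Ideal.mul_mem_right _ _ (Ideal.subset_span (by simp))
  · have hamem : C a ∈ Ideal.span {X ^ n - C g, f} := by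
      rw [← h]; exact Ideal.subset_span (by simp)
    exact hga (by simpa using dvd_coeff_zero_of_mem_span (a := g) (by simp [hq, hf]) hamem)

end Polynomial

theorem Ideal.span_insert_eq_of_span_image_mk_eq {B : Type*} [CommRing B] {q : B} {s t : Set B}
    (h : Ideal.span (Ideal.Quotient.mk (Ideal.span {q}) '' s) =
      Ideal.span (Ideal.Quotient.mk (Ideal.span {q}) '' t)) :
    Ideal.span (insert q s) = Ideal.span (insert q t) := by
  ext x
  rw [Ideal.span_insert, Ideal.span_insert, sup_comm (Ideal.span {q}), sup_comm (Ideal.span {q}),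
    ← Ideal.mem_quotient_iff_mem_sup, ← Ideal.mem_quotient_iff_mem_sup, Ideal.map_span,
    Ideal.map_span, h]

theorem not_prod_dvd_of_irreducible {M ι : Type*} [CommMonoidWithZero M] [IsCancelMulZero M]
    [Fintype ι] {h : ι → M} (hirr : ∀ i, Irreducible (h i)) {i j : ι} (hij : i ≠ j) :
    ¬(∏ k, h k) ∣ h i := by
  classical
  rw [← Finset.mul_prod_erase _ h (Finset.mem_univ i)]
  intro hdvd
  have hunit : (∏ k ∈ Finset.univ.erase i, h k) ∣ 1 :=
    (mul_dvd_mul_iff_left (hirr i).ne_zero).mp (by simpa using hdvd)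
  exact (hirr j).not_isUnit <| isUnit_of_dvd_one <|
    (Finset.dvd_prod_of_mem h (Finset.mem_erase.mpr ⟨hij.symm, Finset.mem_univ j⟩)).trans hunit

/-- `ρ b = ∑ₑ bₑ Xᵉ` is the decomposition of `b` into homogeneous components for an `ℕ`-grading
of `B`. -/
structure IsGrading {B : Type*} [CommSemiring B] (ρ : B →+* B[X]) : Prop where
  eval_one (b : B) : (ρ b).eval 1 = b
  map_coeff (b : B) (e : ℕ) : ρ ((ρ b).coeff e) = C ((ρ b).coeff e) * X ^ e

namespace IsGrading

variable {B : Type*}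

-- The counit and coassociativity laws of a coaction with `X ↦ X ⊗ X`; as equalities of ring maps
-- they can be checked on generators.
theorem of_comp_eq [CommSemiring B] {ρ : B →+* B[X]}
    (h₁ : (evalRingHom 1).comp ρ = RingHom.id B)
    (h₂ : (mapRingHom ρ).comp ρ = (eval₂RingHom (C.comp C) (C X * X)).comp ρ) : IsGrading ρ where
  eval_one b := RingHom.congr_fun h₁ b
  map_coeff b e := by
    simpa [coeff_eval₂_C_comp_C_X_mul_X] using congr_arg (coeff · e) (RingHom.congr_fun h₂ b)

theorem coeff_mem_span_of_forall_homogeneous [CommSemiring B] {ρ : B →+* B[X]} {s : Set B}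
    (hs : ∀ a ∈ s, ∃ e, ρ a = C a * X ^ e) {x : B} (hx : x ∈ Ideal.span s) (e : ℕ) :
    (ρ x).coeff e ∈ Ideal.span s := by
  induction hx using Submodule.span_induction generalizing e with
  | mem a ha =>
    obtain ⟨d, hd⟩ := hs a ha
    rw [hd, coeff_C_mul_X_pow]
    split_ifs
    · exact Ideal.subset_span ha
    · exact Ideal.zero_mem _
  | zero => simp
  | add x y _ _ hx hy => simpa using Ideal.add_mem _ (hx e) (hy e)
  | smul r x _ hx =>
    rw [smul_eq_mul, map_mul, coeff_mul]
    exact Ideal.sum_mem _ fun p _ => Ideal.mul_mem_left _ _ (hx p.2)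

theorem exists_eq_C_mul_X_pow_of_span_eq [CommRing B] [IsDomain B] {ρ : B →+* B[X]}
    (hρ : IsGrading ρ) {s : Set B} (hs : ∀ a ∈ s, ∃ e, ρ a = C a * X ^ e) {φ : B}
    (hφ : φ ≠ 0) (hspan : Ideal.span s = Ideal.span {φ}) : ∃ e, ρ φ = C φ * X ^ e := by
  have hρφ : ρ φ ≠ 0 := fun h => hφ (by simpa [h] using (hρ.eval_one φ).symm)
  set e := (ρ φ).natDegree
  -- `φₑ = γ φ`, and applying `ρ` makes `ρ φ` a factor of the monomial `φₑ Xᵉ`.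
  obtain ⟨γ, hγ⟩ := Ideal.mem_span_singleton'.mp <|
    hspan ▸ coeff_mem_span_of_forall_homogeneous hs (hspan ▸ Ideal.mem_span_singleton_self φ) e
  have hprod : ρ φ * ρ γ = C ((ρ φ).coeff e) * X ^ e := by
    rw [mul_comm, ← map_mul, hγ, hρ.map_coeff]
  simpa only [hρ.eval_one] using
    exists_eq_C_eval_one_mul_X_pow_of_mul_eq_C_mul_X_pow (leadingCoeff_ne_zero.mpr hρφ) hprod

end IsGrading

section Quotient

variable {B : Type*} [CommRing B] (ρ : B →+* B[X]) (I : Ideal B)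
  (hI : ∀ a ∈ I, ∀ e, (ρ a).coeff e ∈ I)

noncomputable def quotientGrading : B ⧸ I →+* (B ⧸ I)[X] :=
  Ideal.Quotient.lift I ((mapRingHom (Ideal.Quotient.mk I)).comp ρ) fun a ha => by
    ext e; simpa [Ideal.Quotient.eq_zero_iff_mem] using hI a ha e

theorem quotientGrading_mk (a : B) :
    quotientGrading ρ I hI (Ideal.Quotient.mk I a) = (ρ a).map (Ideal.Quotient.mk I) := rfl

variable {ρ} in
theorem IsGrading.quotientGrading (hρ : IsGrading ρ) : IsGrading (quotientGrading ρ I hI) where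
  eval_one b := by
    obtain ⟨a, rfl⟩ := Ideal.Quotient.mk_surjective b
    rw [quotientGrading_mk, eval_map, ← map_one (Ideal.Quotient.mk I), eval₂_hom, hρ.eval_one]
  map_coeff b e := by
    obtain ⟨a, rfl⟩ := Ideal.Quotient.mk_surjective b
    rw [quotientGrading_mk, coeff_map, quotientGrading_mk, hρ.map_coeff, Polynomial.map_mul,
      map_C, Polynomial.map_pow, map_X]

end Quotient

namespace MvPolynomial

variable {R σ : Type*} [CommRing R]

/-- The coefficient of `Xᵘ` in `weightHom c p` is the weighted homogeneous component of `p` of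
degree `u`. -/
noncomputable def weightHom (c : σ → ℕ) : MvPolynomial σ R →+* (MvPolynomial σ R)[X] :=
  eval₂Hom (Polynomial.C.comp C) fun i => Polynomial.C (X i) * Polynomial.X ^ c i

variable (c : σ → ℕ)

@[simp] theorem weightHom_C (a : R) : weightHom c (C a) = Polynomial.C (C a) := eval₂Hom_C _ _ _

@[simp] theorem weightHom_X (i : σ) :
    weightHom c (X i : MvPolynomial σ R) = Polynomial.C (X i) * Polynomial.X ^ c i :=
  eval₂Hom_X' _ _ _

theorem weightHom_monomial (s : σ →₀ ℕ) (a : R) :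
    weightHom c (monomial s a) =
      Polynomial.C (monomial s a) * Polynomial.X ^ Finsupp.weight c s := by
  induction s using Finsupp.induction with
  | zero => simp
  | single_add i k s hi hk ih =>
    have : monomial (Finsupp.single i k + s) a = X i ^ k * monomial s a := by
      rw [X_pow_eq_monomial, monomial_mul, one_mul]
    rw [this, map_mul, ih, map_pow, weightHom_X, map_add, Finsupp.weight_single, Polynomial.C_mul,
      Polynomial.C_pow]
    ring

theorem weightHom_of_isWeightedHomogeneous {p : MvPolynomial σ R} {u : ℕ}
    (hp : p.IsWeightedHomogeneous c u) : weightHom c p = Polynomial.C p * Polynomial.X ^ u := by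
  conv_lhs => rw [p.as_sum, map_sum]
  conv_rhs => rw [p.as_sum, map_sum, Finset.sum_mul]
  refine Finset.sum_congr rfl fun s hs => ?_
  rw [weightHom_monomial, hp (mem_support_iff.mp hs)]

theorem eval_one_weightHom (p : MvPolynomial σ R) : (weightHom c p).eval 1 = p := by
  have : (evalRingHom 1).comp (weightHom c) = RingHom.id (MvPolynomial σ R) := by
    ext <;> simp
  exact RingHom.congr_fun this p

theorem weightHom_mul_left (n : ℕ) (p : MvPolynomial σ R) :
    weightHom (fun i => n * c i) p = Polynomial.expand _ n (weightHom c p) := by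
  have : weightHom (fun i => n * c i) =
      (Polynomial.expand (MvPolynomial σ R) n : _ →+* _).comp (weightHom (R := R) c) :=
    ringHom_ext (fun a => by simp) fun i => by simp [← pow_mul]
  exact RingHom.congr_fun this p

theorem weightHom_mul_left_of_isWeightedHomogeneous (n : ℕ) {p : MvPolynomial σ R} {u : ℕ}
    (hp : p.IsWeightedHomogeneous c u) :
    weightHom (fun i => n * c i) p = Polynomial.C p * Polynomial.X ^ (n * u) := by
  rw [weightHom_mul_left, weightHom_of_isWeightedHomogeneous c hp]
  simp [pow_mul]

variable (m : ℕ)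

/-- The grading of `(MvPolynomial σ R)[X]` giving `xᵢ` weight `c i` and `X` weight `m`. -/
noncomputable def gradingHom : (MvPolynomial σ R)[X] →+* (MvPolynomial σ R)[X][X] :=
  eval₂RingHom (S := (MvPolynomial σ R)[X][X]) ((mapRingHom Polynomial.C).comp (weightHom c))
    (Polynomial.C Polynomial.X * Polynomial.X ^ m)

@[simp] theorem gradingHom_C (a : MvPolynomial σ R) :
    gradingHom c m (Polynomial.C a) = (weightHom c a).map Polynomial.C := by
  simp [gradingHom]

@[simp] theorem gradingHom_X :
    gradingHom (R := R) c m Polynomial.X = Polynomial.C Polynomial.X * Polynomial.X ^ m := by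
  simp [gradingHom]

theorem isGrading_gradingHom : IsGrading (gradingHom (R := R) c m) := by
  refine IsGrading.of_comp_eq ?_ ?_
  · refine Polynomial.ringHom_ext (fun a => ?_) (by simp)
    simp [eval_one_map, eval_one_weightHom]
  · refine Polynomial.ringHom_ext' (ringHom_ext (fun a => by simp) fun i => ?_) ?_ <;>
      simp [mul_pow, mul_assoc]

theorem coeff_coeff_gradingHom (f : (MvPolynomial σ R)[X]) (e j : ℕ) :
    ((gradingHom c m f).coeff e).coeff j =
      if m * j ≤ e then (weightHom c (f.coeff j)).coeff (e - m * j) else 0 := by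
  induction f using Polynomial.induction_on' with
  | add f g hf hg =>
    simp only [map_add, Polynomial.coeff_add, hf, hg]; split_ifs <;> simp
  | monomial i a =>
    rw [← Polynomial.C_mul_X_pow_eq_monomial, map_mul, map_pow, gradingHom_C, gradingHom_X,
      mul_pow (M := (MvPolynomial σ R)[X][X]), ← Polynomial.C_pow, ← pow_mul, ← mul_assoc,
      coeff_mul_X_pow', coeff_mul_C, Polynomial.coeff_map, Polynomial.coeff_C_mul_X_pow]
    rcases eq_or_ne j i with rfl | hji
    · split_ifs <;> simp_all
    · split_ifs <;> simp [hji]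

theorem natDegree_coeff_gradingHom_le (f : (MvPolynomial σ R)[X]) (e : ℕ) :
    ((gradingHom c m f).coeff e).natDegree ≤ f.natDegree :=
  natDegree_le_iff_coeff_eq_zero.mpr fun j hj => by
    rw [coeff_coeff_gradingHom, coeff_eq_zero_of_natDegree_lt hj]; simp

theorem exists_weightHom_eq_of_dvd [IsDomain R] {p a : MvPolynomial σ R} {u : ℕ}
    (hp : weightHom c p = Polynomial.C p * Polynomial.X ^ u) (hp0 : p ≠ 0) (ha : a ∣ p) :
    ∃ μ, weightHom c a = Polynomial.C a * Polynomial.X ^ μ := by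
  obtain ⟨b, rfl⟩ := ha
  obtain ⟨μ, hμ⟩ := exists_eq_C_eval_one_mul_X_pow_of_mul_eq_C_mul_X_pow (P := weightHom c a)
    (Q := weightHom c b) hp0 ((map_mul _ _ _).symm.trans hp)
  exact ⟨μ, by rwa [eval_one_weightHom] at hμ⟩

theorem gradingHom_X_pow_sub_C {n : ℕ} {g : MvPolynomial σ R}
    (hg : weightHom c g = Polynomial.C g * Polynomial.X ^ (n * m)) :
    gradingHom c m (Polynomial.X ^ n - Polynomial.C g) =
      Polynomial.C (Polynomial.X ^ n - Polynomial.C g) * Polynomial.X ^ (n * m) := by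
  simp [hg]
  ring

theorem eq_C_or_coeff_zero_eq_zero_of_gradingHom_eq {n e : ℕ} (hmn : m.Coprime n)
    {f : (MvPolynomial σ R)[X]} (hf : f.natDegree < n)
    (he : gradingHom (fun i => n * c i) m f = Polynomial.C f * Polynomial.X ^ e) :
    f = Polynomial.C (f.coeff 0) ∨ f.coeff 0 = 0 := by
  have key : ∀ j, f.coeff j ≠ 0 → m * j ≤ e ∧ n ∣ e - m * j := by
    intro j hj
    have := coeff_coeff_gradingHom (fun i => n * c i) m f e j
    rw [he, coeff_C_mul_X_pow, if_pos rfl, weightHom_mul_left, coeff_expand (by omega)] at this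
    rw [this] at hj
    split_ifs at hj with h₁ h₂
    · exact ⟨h₁, h₂⟩
    all_goals exact absurd rfl hj
  rcases eq_or_ne (f.coeff 0) 0 with h₀ | h₀
  · exact Or.inr h₀
  refine Or.inl (Polynomial.ext fun j => ?_)
  rw [Polynomial.coeff_C]
  split_ifs with hj
  · rw [hj]
  by_contra hfj
  have hnj : n ∣ m * j := by
    have := Nat.dvd_sub (key 0 h₀).2 (key j hfj).2
    rwa [mul_zero, Nat.sub_zero, Nat.sub_sub_self (key j hfj).1] at this
  have := Nat.le_of_dvd (Nat.pos_of_ne_zero hj) (hmn.symm.dvd_of_dvd_mul_left hnj)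
  have := le_natDegree_of_ne_zero hfj
  omega

theorem eq_C_or_coeff_zero_eq_zero_of_span_eq [Nontrivial R] {n : ℕ} (hn : 0 < n)
    (hmn : m.Coprime n) {g : MvPolynomial σ R} (hg : g.IsWeightedHomogeneous c m)
    [IsDomain ((MvPolynomial σ R)[X] ⧸ Ideal.span {Polynomial.X ^ n - Polynomial.C g})]
    {s : Set (MvPolynomial σ R)[X]}
    (hs : ∀ a ∈ s, ∃ e, gradingHom (fun i => n * c i) m a = Polynomial.C a * Polynomial.X ^ e)
    {f : (MvPolynomial σ R)[X]} (hf : f.natDegree < n)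
    (hspan : Ideal.span (Ideal.Quotient.mk (Ideal.span {Polynomial.X ^ n - Polynomial.C g}) '' s) =
      Ideal.span {Ideal.Quotient.mk (Ideal.span {Polynomial.X ^ n - Polynomial.C g}) f}) :
    f = Polynomial.C (f.coeff 0) ∨ f.coeff 0 = 0 := by
  set q : (MvPolynomial σ R)[X] := Polynomial.X ^ n - Polynomial.C g
  have hq : q.Monic := monic_X_pow_sub_C g hn.ne'
  have hqdeg : q.natDegree = n := natDegree_X_pow_sub_C
  have hfq : f.natDegree < q.natDegree := by rwa [hqdeg]
  have hI : ∀ a ∈ Ideal.span {q}, ∀ e,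
      (gradingHom (fun i => n * c i) m a).coeff e ∈ Ideal.span {q} := by
    refine fun a ha => IsGrading.coeff_mem_span_of_forall_homogeneous ?_ ha
    rintro _ rfl
    exact ⟨_, gradingHom_X_pow_sub_C _ m (weightHom_mul_left_of_isWeightedHomogeneous c n hg)⟩
  rcases eq_or_ne f 0 with rfl | hf0
  · simp
  have hφ0 : Ideal.Quotient.mk (Ideal.span {q}) f ≠ 0 := fun h0 =>
    hf0 (eq_of_mk_eq_of_natDegree_lt hq hfq (by simpa [hqdeg]) (by simpa using h0))
  obtain ⟨e, he⟩ := ((isGrading_gradingHom _ m).quotientGrading (Ideal.span {q}) hI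
    ).exists_eq_C_mul_X_pow_of_span_eq (s := Ideal.Quotient.mk _ '' s)
    (by
      rintro _ ⟨a, ha, rfl⟩
      obtain ⟨e, he⟩ := hs a ha
      exact ⟨e, by simp [quotientGrading_mk, he]⟩)
    hφ0 hspan
  refine eq_C_or_coeff_zero_eq_zero_of_gradingHom_eq c m hmn hf (eq_of_map_mk_eq hq
    (fun e => (natDegree_coeff_gradingHom_le _ m f e).trans_lt hfq) (fun e' => ?_)
    (by simpa [quotientGrading_mk] using he))
  rw [coeff_C_mul_X_pow]
  split_ifs
  · exact hfq
  · simpa [hqdeg]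

end MvPolynomial

open MvPolynomial in
/-- Let `k` be a field and let `g ∈ k[x_1,…,x_d]` be weighted homogeneous of
degree `m` with respect to positive integer weights `c_1,…,c_d`, with `m` relatively prime to
`n` and `n ≥ 2`.  Suppose `R = k[z,x_1,…,x_d]/(zⁿ − g)` is a normal domain and
`g = h_1 ⋯ h_r` is a factorization into irreducible polynomials with `r ≥ 2`.  Then the ideal
`(z, h_1)R` is not principal.  Here `k[z,x_1,…,x_d]` is realized as the polynomial ring in
`z` over `k[x_1,…,x_d]`, so `z = Polynomial.X` and `h_1` is included via `Polynomial.C`. -/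
theorem divisor_class_stmt_4 {k : Type*} [Field k] {d n m r : ℕ} (hn : 2 ≤ n) (hr : 2 ≤ r)
    (c : Fin d → ℕ)
    (g : MvPolynomial (Fin d) k) (hwh : g.IsWeightedHomogeneous c m)
    (hmn : Nat.Coprime m n)
    (h : Fin r → MvPolynomial (Fin d) k) (hirr : ∀ i, Irreducible (h i))
    (hg : g = ∏ i, h i)
    [IsDomain (Polynomial (MvPolynomial (Fin d) k) ⧸
      Ideal.span {Polynomial.X ^ n - Polynomial.C g})] :
    ¬ Submodule.IsPrincipal (Ideal.span
        {Ideal.Quotient.mk (Ideal.span {Polynomial.X ^ n - Polynomial.C g}) Polynomial.X,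
         Ideal.Quotient.mk (Ideal.span {Polynomial.X ^ n - Polynomial.C g})
           (Polynomial.C (h ⟨0, by omega⟩))} :
      Ideal (Polynomial (MvPolynomial (Fin d) k) ⧸
        Ideal.span {Polynomial.X ^ n - Polynomial.C g})) := by
  have hdvd : h ⟨0, by omega⟩ ∣ g := hg ▸ Finset.dvd_prod_of_mem h (Finset.mem_univ _)
  obtain ⟨μ, hμ⟩ := exists_weightHom_eq_of_dvd _
    (weightHom_mul_left_of_isWeightedHomogeneous c n hwh)
    (hg ▸ Finset.prod_ne_zero_iff.mpr fun i _ => (hirr i).ne_zero) hdvd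
  rintro ⟨φ, hφ⟩
  obtain ⟨f, hf, rfl⟩ := exists_natDegree_lt_mk_eq (monic_X_pow_sub_C g (by omega))
    (by rw [natDegree_X_pow_sub_C]; omega) φ
  rw [natDegree_X_pow_sub_C] at hf
  have hspan :
      Ideal.span (Ideal.Quotient.mk _ '' {Polynomial.X, Polynomial.C (h ⟨0, by omega⟩)}) =
        Ideal.span {Ideal.Quotient.mk (Ideal.span {Polynomial.X ^ n - Polynomial.C g}) f} := by
    rw [Set.image_pair]; exact hφ
  refine span_insert_X_C_ne_span_pair hn (hirr _).not_isUnit hdvd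
    (hg ▸ not_prod_dvd_of_irreducible hirr (j := ⟨1, by omega⟩) (by simp [Fin.ext_iff]))
    ?_ (Ideal.span_insert_eq_of_span_image_mk_eq (by rwa [Set.image_singleton]))
  refine eq_C_or_coeff_zero_eq_zero_of_span_eq c m (by omega) hmn hwh ?_ hf hspan
  rintro _ (rfl | rfl)
  · exact ⟨m, by simp⟩
  · exact ⟨μ, by simp [hμ]⟩
end

section
/- Let k be a field, n ≥ 2, and let g ∈ k[x_1,…,x_d] be a nonconstant weighted homogeneous polynomial (with respect to positive integer weights on x_1,…,x_d) with irreducible factor h. Suppose the hypersurface ring R = k[z,x_0,x_1,…,x_d]/(z^n − x_0·g) is a normal domain. Then the ideal (z, h)R is a height-one prime ideal of R that is not principal; in particular, R is not a unique factorization domain. -/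
/-!
Specialising `x₀ ↦ 0` and `x_{i+1} ↦ x_i` and reducing modulo `z²` maps `R` onto the dual numbers
over `k[x₁,…,x_d]`, where `(ε, h)` is not principal because `h` is a nonzero nonunit; hence
`P = (z, h)R` is not principal. `P` is the kernel of `R → k[x₀,…,x_d]/(h)`, `z ↦ 0`, so it is prime,
and every prime containing `h` contains `zⁿ = x₀g`, hence `z`. So `P` is minimal over the principal
ideal `(h)`, and Krull's principal ideal theorem gives height one. Since a height-one prime of a
UFD is principal, `R` is not a UFD.
-/

open Polynomial

theorem DualNumber.not_isPrincipal_span_eps_inl {B : Type*} [CommRing B] [IsDomain B] {b : B}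
    (hb0 : b ≠ 0) (hb : ¬IsUnit b) :
    ¬(Ideal.span {DualNumber.eps, TrivSqZeroExt.inl b} : Ideal (DualNumber B)).IsPrincipal := by
  rintro ⟨p, hp⟩
  rw [Ideal.submodule_span_eq] at hp
  obtain ⟨x, hx⟩ := Ideal.mem_span_singleton'.mp (hp ▸ Ideal.subset_span (by simp) :
    DualNumber.eps ∈ Ideal.span {p})
  obtain ⟨y, hy⟩ := Ideal.mem_span_singleton'.mp (hp ▸ Ideal.subset_span (by simp) :
    TrivSqZeroExt.inl b ∈ Ideal.span {p})
  obtain ⟨u, v, huv⟩ := Ideal.mem_span_pair.mp (hp ▸ Ideal.mem_span_singleton_self p :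
    p ∈ Ideal.span {DualNumber.eps, TrivSqZeroExt.inl b})
  have hp₀ : p.fst ≠ 0 := by
    rintro h0
    exact hb0 (by simpa [h0] using (congrArg TrivSqZeroExt.fst hy).symm)
  have hx₀ : x.fst = 0 := by simpa [hp₀] using congrArg TrivSqZeroExt.fst hx
  have hunit : x.snd * p.fst = 1 := by simpa [hx₀] using congrArg TrivSqZeroExt.snd hx
  have hp₁ : p.fst = v.fst * b := by simpa using (congrArg TrivSqZeroExt.fst huv).symm
  exact hb (IsUnit.of_mul_eq_one (x.snd * v.fst) (by linear_combination hunit - x.snd * hp₁))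

theorem Ideal.height_eq_one_of_mem_minimalPrimes_span_singleton {R : Type*} [CommRing R]
    [IsNoetherianRing R] [IsDomain R] {x : R} {P : Ideal R}
    (hP : P ∈ (Ideal.span {x}).minimalPrimes) (hP0 : P ≠ ⊥) : P.height = 1 :=
  have := hP.isPrime
  le_antisymm (Ideal.height_le_one_of_isPrincipal_of_mem_minimalPrimes _ P hP)
    (by simpa [Order.one_le_iff_ne_zero])

namespace MvPolynomial

variable {R : Type*} [CommRing R] {d : ℕ}

theorem finSuccEquiv_rename_succ (p : MvPolynomial (Fin d) R) :
    finSuccEquiv R d (rename Fin.succ p) = Polynomial.C p := by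
  have : (finSuccEquiv R d).toAlgHom.comp (rename Fin.succ) =
      (Polynomial.CAlgHom (R := R) (A := MvPolynomial (Fin d) R)).restrictScalars R := by
    ext i
    simp [finSuccEquiv_X_succ, Polynomial.CAlgHom]
  exact DFunLike.congr_fun this p

theorem prime_rename_succ_iff {p : MvPolynomial (Fin d) R} :
    Prime (rename Fin.succ p) ↔ Prime p := by
  rw [← MulEquiv.prime_iff (finSuccEquiv R d).toMulEquiv]
  simpa [finSuccEquiv_rename_succ] using Polynomial.prime_C_iff

end MvPolynomial

namespace Polynomial

variable {A : Type*} [CommRing A] {n : ℕ} {a j : A}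

local notation "𝓡" => A[X] ⧸ Ideal.span {X ^ n - C a}
local notation "mk" => Ideal.Quotient.mk (Ideal.span {X ^ n - C a})

theorem mk_X_pow_eq_mk_C : (mk X : 𝓡) ^ n = mk (C a) := by
  rw [← map_pow, Ideal.Quotient.eq]
  exact Ideal.mem_span_singleton_self _

theorem isPrime_span_mk_X_mk_C (hj : Prime j) (hja : j ∣ a) (hn : n ≠ 0) :
    (Ideal.span {mk X, mk (C j)} : Ideal 𝓡).IsPrime := by
  have hprime : (Ideal.span {C j, X} : Ideal A[X]).IsPrime := by
    have : (Ideal.span {j}).IsPrime := (Ideal.span_singleton_prime hj.ne_zero).mpr hj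
    have := MulEquiv.isDomain _ (quotientSpanCXSubCAlgEquiv j 0).toMulEquiv
    rwa [map_zero, sub_zero, Ideal.Quotient.isDomain_iff_prime] at this
  have hker : RingHom.ker mk ≤ Ideal.span {C j, X} := by
    obtain ⟨b, rfl⟩ := hja
    rw [Ideal.mk_ker, Ideal.span_singleton_le_iff_mem, Ideal.mem_span_pair]
    refine ⟨-C b, X ^ (n - 1), ?_⟩
    rw [C_mul, ← pow_succ, Nat.sub_add_cancel (Nat.one_le_iff_ne_zero.mpr hn)]
    ring
  have := Ideal.map_isPrime_of_surjective Ideal.Quotient.mk_surjective hker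
  rwa [Ideal.map_span, Set.image_pair, Set.pair_comm] at this

theorem span_mk_X_mk_C_mem_minimalPrimes (hP : (Ideal.span {mk X, mk (C j)} : Ideal 𝓡).IsPrime)
    (hja : j ∣ a) :
    (Ideal.span {mk X, mk (C j)} : Ideal 𝓡) ∈ (Ideal.span {mk (C j)}).minimalPrimes := by
  refine ⟨⟨hP, Ideal.span_mono (by simp)⟩, fun Q ⟨hQ, hjQ⟩ _ => ?_⟩
  have hj : mk (C j) ∈ Q := (Ideal.span_singleton_le_iff_mem _).mp hjQ
  have hX : mk X ∈ Q := by
    refine hQ.mem_of_pow_mem n ?_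
    obtain ⟨b, hb⟩ := hja
    have hab : mk (C a) = mk (C j) * mk (C b) := by rw [← map_mul, ← C_mul, ← hb]
    rw [mk_X_pow_eq_mk_C, hab]
    exact Q.mul_mem_right _ hj
  simpa [Ideal.span_le, Set.insert_subset_iff] using ⟨hX, hj⟩

variable {B : Type*} [CommRing B]

noncomputable def quotXPowSubCToDualNumber (φ : A →+* B) (hφ : φ a = 0) (hn : 2 ≤ n) :
    𝓡 →+* DualNumber B :=
  Ideal.Quotient.lift _ (eval₂RingHom ((TrivSqZeroExt.inlHom B B).comp φ) DualNumber.eps) <| by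
    intro p hp
    obtain ⟨q, rfl⟩ := Ideal.mem_span_singleton'.mp hp
    have hε : (DualNumber.eps : DualNumber B) ^ n = 0 := by
      rw [← Nat.sub_add_cancel hn, pow_add, sq, DualNumber.eps_mul_eps, mul_zero]
    simp [hε, hφ]

theorem not_isPrincipal_span_mk_X_mk_C [IsDomain B] (φ : A →+* B) (hφ : φ a = 0) (hn : 2 ≤ n)
    (hj0 : φ j ≠ 0) (hj : ¬IsUnit (φ j)) :
    ¬(Ideal.span {mk X, mk (C j)} : Ideal 𝓡).IsPrincipal := by
  intro hP
  have := hP.map_ringHom (quotXPowSubCToDualNumber φ hφ hn)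
  rw [Ideal.map_span, Set.image_pair] at this
  exact DualNumber.not_isPrincipal_span_eps_inl hj0 hj
    (by simpa [quotXPowSubCToDualNumber] using this)

end Polynomial

open MvPolynomial in
theorem divisor_class_stmt_6_general {k : Type*} [Field k] {d n : ℕ} (hn : 2 ≤ n)
    (g : MvPolynomial (Fin d) k)
    (h : MvPolynomial (Fin d) k) (hirr : Irreducible h) (hdvd : h ∣ g)
    [IsDomain (Polynomial (MvPolynomial (Fin (d + 1)) k) ⧸
      Ideal.span {Polynomial.X ^ n -
        Polynomial.C (MvPolynomial.X 0 * MvPolynomial.rename Fin.succ g)})] :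
    (∃ hp : (Ideal.span
        {Ideal.Quotient.mk (Ideal.span {Polynomial.X ^ n -
            Polynomial.C (MvPolynomial.X 0 * MvPolynomial.rename Fin.succ g)}) Polynomial.X,
         Ideal.Quotient.mk (Ideal.span {Polynomial.X ^ n -
            Polynomial.C (MvPolynomial.X 0 * MvPolynomial.rename Fin.succ g)})
           (Polynomial.C (MvPolynomial.rename Fin.succ h))} :
        Ideal (Polynomial (MvPolynomial (Fin (d + 1)) k) ⧸
          Ideal.span {Polynomial.X ^ n -
            Polynomial.C (MvPolynomial.X 0 * MvPolynomial.rename Fin.succ g)})).IsPrime,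
      Order.height (⟨_, hp⟩ : PrimeSpectrum (Polynomial (MvPolynomial (Fin (d + 1)) k) ⧸
        Ideal.span {Polynomial.X ^ n -
          Polynomial.C (MvPolynomial.X 0 * MvPolynomial.rename Fin.succ g)})) = 1 ∧
      ¬ Submodule.IsPrincipal (Ideal.span
        {Ideal.Quotient.mk (Ideal.span {Polynomial.X ^ n -
            Polynomial.C (MvPolynomial.X 0 * MvPolynomial.rename Fin.succ g)}) Polynomial.X,
         Ideal.Quotient.mk (Ideal.span {Polynomial.X ^ n -
            Polynomial.C (MvPolynomial.X 0 * MvPolynomial.rename Fin.succ g)})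
           (Polynomial.C (MvPolynomial.rename Fin.succ h))} :
        Ideal (Polynomial (MvPolynomial (Fin (d + 1)) k) ⧸
          Ideal.span {Polynomial.X ^ n -
            Polynomial.C (MvPolynomial.X 0 * MvPolynomial.rename Fin.succ g)}))) ∧
    ¬ UniqueFactorizationMonoid (Polynomial (MvPolynomial (Fin (d + 1)) k) ⧸
      Ideal.span {Polynomial.X ^ n -
        Polynomial.C (MvPolynomial.X 0 * MvPolynomial.rename Fin.succ g)}) := by
  have hH : Prime (rename Fin.succ h) := prime_rename_succ_iff.mpr hirr.prime
  have hHa : rename Fin.succ h ∣ X 0 * rename Fin.succ g :=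
    dvd_mul_of_dvd_right (map_dvd _ hdvd) _
  let φ := (Polynomial.evalRingHom 0).comp (finSuccEquiv k d).toRingHom
  have hφ : ∀ p, φ (rename Fin.succ p) = p := fun p => by simp [φ, finSuccEquiv_rename_succ]
  have hφa : φ (X 0 * rename Fin.succ g) = 0 := by simp [φ, finSuccEquiv_X_zero]
  have hnp := not_isPrincipal_span_mk_X_mk_C φ hφa hn
    (by rw [hφ]; exact hirr.ne_zero) (by rw [hφ]; exact hirr.not_isUnit)
  have hP := isPrime_span_mk_X_mk_C (n := n) hH hHa (by omega)
  have hheight := Ideal.height_eq_one_of_mem_minimalPrimes_span_singleton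
    (span_mk_X_mk_C_mem_minimalPrimes hP hHa) (fun h0 => hnp (h0 ▸ bot_isPrincipal))
  have horder := (PrimeSpectrum.height_eq_orderHeight ⟨_, hP⟩).symm.trans hheight
  exact ⟨⟨hP, horder, hnp⟩,
    fun _ => hnp (UniqueFactorizationMonoid.isPrincipal_of_height_eq_one hheight)⟩

/-- Let `k` be a field, `n ≥ 2`, and let `g ∈ k[x_1,…,x_d]` be a nonconstant
weighted homogeneous polynomial (with respect to positive integer weights), with irreducible
factor `h`.  Suppose `R = k[z,x_0,x_1,…,x_d]/(zⁿ − x_0·g)` is a normal domain.  Then `(z,h)R`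
is a height-one prime ideal of `R` that is not principal; in particular `R` is not a unique
factorization domain.  Here `k[x_0,x_1,…,x_d]` is realized as `MvPolynomial (Fin (d+1)) k`
with `x_0` the variable of index `0` and `x_1,…,x_d` included via `rename Fin.succ`, and `R`
is the polynomial ring in `z` over it, modulo `zⁿ − x_0·g`. -/
theorem divisor_class_stmt_6 {k : Type*} [Field k] {d n m : ℕ} (hn : 2 ≤ n)
    (c : Fin d → ℕ) (hc : ∀ i, 0 < c i)
    (g : MvPolynomial (Fin d) k) (hwh : g.IsWeightedHomogeneous c m)
    (hnc : 0 < g.totalDegree)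
    (h : MvPolynomial (Fin d) k) (hirr : Irreducible h) (hdvd : h ∣ g)
    [IsDomain (Polynomial (MvPolynomial (Fin (d + 1)) k) ⧸
      Ideal.span {Polynomial.X ^ n -
        Polynomial.C (MvPolynomial.X 0 * MvPolynomial.rename Fin.succ g)})]
    [IsIntegrallyClosed (Polynomial (MvPolynomial (Fin (d + 1)) k) ⧸
      Ideal.span {Polynomial.X ^ n -
        Polynomial.C (MvPolynomial.X 0 * MvPolynomial.rename Fin.succ g)})] :
    (∃ hp : (Ideal.span
        {Ideal.Quotient.mk (Ideal.span {Polynomial.X ^ n -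
            Polynomial.C (MvPolynomial.X 0 * MvPolynomial.rename Fin.succ g)}) Polynomial.X,
         Ideal.Quotient.mk (Ideal.span {Polynomial.X ^ n -
            Polynomial.C (MvPolynomial.X 0 * MvPolynomial.rename Fin.succ g)})
           (Polynomial.C (MvPolynomial.rename Fin.succ h))} :
        Ideal (Polynomial (MvPolynomial (Fin (d + 1)) k) ⧸
          Ideal.span {Polynomial.X ^ n -
            Polynomial.C (MvPolynomial.X 0 * MvPolynomial.rename Fin.succ g)})).IsPrime,
      Order.height (⟨_, hp⟩ : PrimeSpectrum (Polynomial (MvPolynomial (Fin (d + 1)) k) ⧸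
        Ideal.span {Polynomial.X ^ n -
          Polynomial.C (MvPolynomial.X 0 * MvPolynomial.rename Fin.succ g)})) = 1 ∧
      ¬ Submodule.IsPrincipal (Ideal.span
        {Ideal.Quotient.mk (Ideal.span {Polynomial.X ^ n -
            Polynomial.C (MvPolynomial.X 0 * MvPolynomial.rename Fin.succ g)}) Polynomial.X,
         Ideal.Quotient.mk (Ideal.span {Polynomial.X ^ n -
            Polynomial.C (MvPolynomial.X 0 * MvPolynomial.rename Fin.succ g)})
           (Polynomial.C (MvPolynomial.rename Fin.succ h))} :
        Ideal (Polynomial (MvPolynomial (Fin (d + 1)) k) ⧸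
          Ideal.span {Polynomial.X ^ n -
            Polynomial.C (MvPolynomial.X 0 * MvPolynomial.rename Fin.succ g)}))) ∧
    ¬ UniqueFactorizationMonoid (Polynomial (MvPolynomial (Fin (d + 1)) k) ⧸
      Ideal.span {Polynomial.X ^ n -
        Polynomial.C (MvPolynomial.X 0 * MvPolynomial.rename Fin.succ g)}) :=
  divisor_class_stmt_6_general hn g h hirr hdvd
end

section
/- Let k be a field, let a, b, c be positive integers with gcd(a,b) = 1, and let f be an irreducible factor in k[x_1,x_2] of the polynomial g = x_1^{ac} + x_2^{bc}. Then f is a polynomial in x_1^a and x_2^b; that is, there exists a polynomial q ∈ k[s,t] in two variables such that f = q(x_1^a, x_2^b). -/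
/-!
Give `x₁` weight `b` and `x₂` weight `a`, so that `g` is weighted homogeneous of degree `abc`.
The substitution `xᵢ ↦ t^{wᵢ} xᵢ` sends a weighted homogeneous polynomial `p` to `p tⁿ`, and in
general its `tⁿ`-coefficient is the weighted component of degree `n`. A factor of `g tᵃᵇᶜ` over a
domain is again a monomial in `t`, so every divisor `f` of `g` is weighted homogeneous, of degree
`d` say. Neither variable divides `g`, so `f` has a monomial free of `x₂` and one free of `x₁`,
whence `b ∣ d` and `a ∣ d`; then `b m₁ + a m₂ = d` and `gcd(a, b) = 1` force `a ∣ m₁` and `b ∣ m₂`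
for every monomial `x₁^{m₁} x₂^{m₂}` of `f`.
-/

namespace Polynomial

variable {R : Type*} [CommRing R] [IsDomain R]

theorem eq_C_mul_X_pow_of_dvd_C_mul_X_pow {p : R[X]} {u : R} {n : ℕ} (hu : u ≠ 0)
    (hp : p ∣ C u * X ^ n) : p = C p.leadingCoeff * X ^ p.natDegree := by
  obtain ⟨q, hpq⟩ := hp
  have hmul : p * q ≠ 0 := hpq ▸ by simpa using hu
  have hp0 := left_ne_zero_of_mul hmul
  have hq0 := right_ne_zero_of_mul hmul
  have hdeg := natDegree_mul hp0 hq0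
  have htrail := natTrailingDegree_mul hp0 hq0
  rw [← hpq, natDegree_C_mul_X_pow _ _ hu] at hdeg
  rw [← hpq, C_mul_X_pow_eq_monomial, natTrailingDegree_monomial hu] at htrail
  have hp_le := p.natTrailingDegree_le_natDegree
  have hq_le := q.natTrailingDegree_le_natDegree
  ext j
  rw [coeff_C_mul_X_pow]
  obtain hj | rfl | hj := lt_trichotomy j p.natDegree
  · rw [if_neg hj.ne, coeff_eq_zero_of_lt_natTrailingDegree (by omega)]
  · rw [if_pos rfl, leadingCoeff]
  · rw [if_neg hj.ne', coeff_eq_zero_of_natDegree_lt hj]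

end Polynomial

namespace MvPolynomial

section WeightedScaling

variable {σ R : Type*} [CommRing R] (w : σ → ℕ)

noncomputable def weightedScaling : MvPolynomial σ R →ₐ[R] Polynomial (MvPolynomial σ R) :=
  aeval fun i => Polynomial.C (X i) * Polynomial.X ^ w i

theorem weightedScaling_monomial (m : σ →₀ ℕ) (r : R) :
    weightedScaling w (monomial m r) =
      Polynomial.C (monomial m r) * Polynomial.X ^ Finsupp.weight w m := by
  rw [weightedScaling, aeval_monomial, monomial_eq, map_mul, Polynomial.algebraMap_apply,
    algebraMap_eq, mul_assoc]
  congr 1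
  simp only [Finsupp.prod, mul_pow, Finset.prod_mul_distrib, map_prod, Polynomial.C_pow, ← pow_mul,
    Finset.prod_pow_eq_pow_sum, Finsupp.weight_apply, Finsupp.sum, smul_eq_mul, mul_comm]

theorem coeff_weightedScaling (p : MvPolynomial σ R) (n : ℕ) :
    (weightedScaling w p).coeff n = weightedHomogeneousComponent w n p := by
  classical
  induction p using MvPolynomial.induction_on' with
  | monomial m r =>
    ext d
    rw [weightedScaling_monomial, Polynomial.coeff_C_mul_X_pow, coeff_weightedHomogeneousComponent]
    by_cases hd : m = d
    · subst hd
      split_ifs <;> simp_all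
    · split_ifs <;> simp [coeff_monomial, hd]
  | add p q hp hq => rw [map_add, Polynomial.coeff_add, hp, hq, map_add]

variable {w}

theorem IsWeightedHomogeneous.weightedScaling_eq {p : MvPolynomial σ R} {n : ℕ}
    (hp : IsWeightedHomogeneous w p n) :
    weightedScaling w p = Polynomial.C p * Polynomial.X ^ n := by
  ext1 j
  rw [coeff_weightedScaling, Polynomial.coeff_C_mul_X_pow]
  split_ifs with hj
  · exact hj ▸ hp.weightedHomogeneousComponent_same
  · exact hp.weightedHomogeneousComponent_ne j hj

theorem isWeightedHomogeneous_of_weightedScaling_eq {p c : MvPolynomial σ R} {n : ℕ}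
    (hp : weightedScaling w p = Polynomial.C c * Polynomial.X ^ n) :
    IsWeightedHomogeneous w p n := by
  classical
  intro m hm
  by_contra hmn
  have hcomp := congr_arg (coeff m) (coeff_weightedScaling w p (Finsupp.weight w m))
  rw [hp, Polynomial.coeff_C_mul_X_pow, if_neg hmn, coeff_weightedHomogeneousComponent,
    if_pos rfl, coeff_zero] at hcomp
  exact hm hcomp.symm

theorem IsWeightedHomogeneous.of_dvd [IsDomain R] {φ ψ : MvPolynomial σ R} {n : ℕ}
    (hφ : IsWeightedHomogeneous w φ n) (hφ0 : φ ≠ 0) (hψ : ψ ∣ φ) :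
    ∃ m, IsWeightedHomogeneous w ψ m :=
  ⟨_, isWeightedHomogeneous_of_weightedScaling_eq <|
    Polynomial.eq_C_mul_X_pow_of_dvd_C_mul_X_pow hφ0 (hφ.weightedScaling_eq ▸ map_dvd _ hψ)⟩

end WeightedScaling

section Divisibility

variable {σ R : Type*} [CommRing R]

theorem exists_mem_support_apply_eq_zero_of_not_X_dvd {p : MvPolynomial σ R} {i : σ}
    (h : ¬X i ∣ p) : ∃ m ∈ p.support, m i = 0 := by
  contrapose! h
  rw [X_dvd_iff_modMonomial_eq_zero]
  ext m
  rw [coeff_zero]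
  by_cases hm : m i = 0
  · rw [coeff_modMonomial_of_not_le _ (by simp [Finsupp.single_le_iff, hm])]
    exact notMem_support_iff.mp fun hmem => h m hmem hm
  · exact coeff_modMonomial_of_le _ (Finsupp.single_le_iff.mpr (Nat.one_le_iff_ne_zero.mpr hm))

theorem not_X_dvd_X_pow_add_X_pow [Nontrivial R] {i j : σ} (hij : i ≠ j) {n : ℕ} (hn : n ≠ 0)
    (m : ℕ) : ¬X i ∣ (X i ^ n + X j ^ m : MvPolynomial σ R) := by
  rw [dvd_add_right (dvd_pow_self _ hn), X_pow_eq_monomial, X_dvd_monomial]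
  simp [hij.symm]

theorem mem_range_aeval_X_pow {w : σ → ℕ} {p : MvPolynomial σ R}
    (h : ∀ m ∈ p.support, ∀ i, w i ∣ m i) :
    p ∈ (aeval (R := R) fun i => (X i : MvPolynomial σ R) ^ w i).range := by
  rw [p.as_sum]
  refine Subalgebra.sum_mem _ fun m hm => ?_
  rw [monomial_eq]
  refine Subalgebra.mul_mem _ (Subalgebra.algebraMap_mem _ _) (Subalgebra.prod_mem _ fun i _ => ?_)
  obtain ⟨k, hk⟩ := h m hm i
  simp only [hk, pow_mul]
  exact Subalgebra.pow_mem _ ((AlgHom.mem_range _).mpr ⟨X i, aeval_X _ i⟩) _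

theorem mem_range_aeval_X_pow_of_isWeightedHomogeneous {a b d : ℕ} (hab : a.Coprime b)
    {f : MvPolynomial (Fin 2) R} (hf : IsWeightedHomogeneous ![b, a] f d)
    (h₀ : ¬X 0 ∣ f) (h₁ : ¬X 1 ∣ f) :
    f ∈ (aeval (R := R) ![(X 0 : MvPolynomial (Fin 2) R) ^ a, X 1 ^ b]).range := by
  have hweight {m : Fin 2 →₀ ℕ} (hm : m ∈ f.support) : m 0 * b + m 1 * a = d := by
    simpa [Finsupp.weight_eq_sum, Fin.sum_univ_two] using hf (mem_support_iff.mp hm)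
  obtain ⟨m₀, hm₀, hm₀1⟩ := exists_mem_support_apply_eq_zero_of_not_X_dvd h₁
  obtain ⟨m₁, hm₁, hm₁0⟩ := exists_mem_support_apply_eq_zero_of_not_X_dvd h₀
  have hbd : b ∣ d := ⟨m₀ 0, by simpa [hm₀1, mul_comm] using (hweight hm₀).symm⟩
  have had : a ∣ d := ⟨m₁ 1, by simpa [hm₁0, mul_comm] using (hweight hm₁).symm⟩
  have hfun : ![(X 0 : MvPolynomial (Fin 2) R) ^ a, X 1 ^ b] = fun i => X i ^ ![a, b] i := by
    ext1 i; fin_cases i <;> rfl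
  rw [hfun]
  refine mem_range_aeval_X_pow fun m hm i => ?_
  have hmd := hweight hm
  fin_cases i
  · exact hab.dvd_of_dvd_mul_right <| (Nat.dvd_add_left (dvd_mul_left a (m 1))).mp (hmd ▸ had)
  · exact hab.symm.dvd_of_dvd_mul_right <| (Nat.dvd_add_right (dvd_mul_left b (m 0))).mp (hmd ▸ hbd)

end Divisibility

end MvPolynomial

open MvPolynomial

theorem divisor_class_stmt_11_general {k : Type*} [Field k] {a b c : ℕ}
    (ha : 0 < a) (hb : 0 < b) (hc : 0 < c) (hab : Nat.Coprime a b)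
    (f : MvPolynomial (Fin 2) k)
    (hdvd : f ∣ (MvPolynomial.X 0 ^ (a * c) + MvPolynomial.X 1 ^ (b * c) :
      MvPolynomial (Fin 2) k)) :
    ∃ q : MvPolynomial (Fin 2) k,
      f = MvPolynomial.aeval
        ![(MvPolynomial.X 0 ^ a : MvPolynomial (Fin 2) k), MvPolynomial.X 1 ^ b] q := by
  set g : MvPolynomial (Fin 2) k := X 0 ^ (a * c) + X 1 ^ (b * c)
  have hg : IsWeightedHomogeneous ![b, a] g (a * b * c) := by
    refine IsWeightedHomogeneous.add ?_ ?_
    · convert (isWeightedHomogeneous_X k ![b, a] 0).pow (a * c) using 1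
      simp only [Matrix.cons_val_zero, smul_eq_mul]; ring
    · convert (isWeightedHomogeneous_X k ![b, a] 1).pow (b * c) using 1
      simp only [Matrix.cons_val_one, Matrix.cons_val_zero, smul_eq_mul]; ring
  have hg₀ : ¬X 0 ∣ g := not_X_dvd_X_pow_add_X_pow (by decide) (by positivity) _
  have hg₁ : ¬X 1 ∣ g := by
    rw [show g = X 1 ^ (b * c) + X 0 ^ (a * c) from add_comm _ _]
    exact not_X_dvd_X_pow_add_X_pow (by decide) (by positivity) _
  obtain ⟨d, hf⟩ := hg.of_dvd (fun h => hg₀ (h ▸ dvd_zero _)) hdvd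
  obtain ⟨q, hq⟩ := mem_range_aeval_X_pow_of_isWeightedHomogeneous hab hf
    (fun h => hg₀ (h.trans hdvd)) (fun h => hg₁ (h.trans hdvd))
  exact ⟨q, hq.symm⟩

/-- Let `k` be a field, `a, b, c` positive integers with `gcd(a,b) = 1`, and
let `f` be an irreducible factor in `k[x₁,x₂]` of `g = x₁^{ac} + x₂^{bc}`.  Then `f` is a
polynomial in `x₁^a` and `x₂^b`: there is a polynomial `q` in two variables with
`f = q(x₁^a, x₂^b)`.  Here `k[x₁,x₂]` is realized as `MvPolynomial (Fin 2) k`, and the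
substitution is expressed by `MvPolynomial.aeval`. -/
theorem divisor_class_stmt_11 {k : Type*} [Field k] {a b c : ℕ}
    (ha : 0 < a) (hb : 0 < b) (hc : 0 < c) (hab : Nat.Coprime a b)
    (f : MvPolynomial (Fin 2) k) (hirr : Irreducible f)
    (hdvd : f ∣ (MvPolynomial.X 0 ^ (a * c) + MvPolynomial.X 1 ^ (b * c) :
      MvPolynomial (Fin 2) k)) :
    ∃ q : MvPolynomial (Fin 2) k,
      f = MvPolynomial.aeval
        ![(MvPolynomial.X 0 ^ a : MvPolynomial (Fin 2) k), MvPolynomial.X 1 ^ b] q :=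
  divisor_class_stmt_11_general ha hb hc hab f hdvd
end

section
/- Let k be a field, let a, b be positive integers with gcd(a,b) = 1, and let λ be a nonzero element of k. Then the polynomial x_1^a − λ·x_2^b is irreducible in the polynomial ring k[x_1,x_2]. -/
/-!
Reading `x₁ ^ a - λ x₂ ^ b` as the monic polynomial `X ^ a - c` over `k[x₂]` with `c = λ x₂ ^ b`,
Gauss's lemma reduces irreducibility to irreducibility over the field `k(x₂)`. When `a` is odd,
`X ^ a - c` is irreducible there unless `c` is a `p`-th power for some prime `p ∣ a`; but a
`p`-th power in `k(x₂)` of a polynomial has degree divisible by `p`, and `p ∤ b` since `a` and `b`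
are coprime. When `a` is even, `b` is odd and the roles of the two variables can be exchanged.
-/

open Polynomial

namespace Polynomial

variable {R : Type*} [CommRing R] [IsDomain R]

theorem dvd_natDegree_of_pow_eq_mul_pow {c r s : R[X]} {p : ℕ} (h : r ^ p = c * s ^ p)
    (hc : c ≠ 0) (hs : s ≠ 0) : p ∣ c.natDegree := by
  have hdeg := congrArg natDegree h
  rw [natDegree_pow, natDegree_mul hc (pow_ne_zero _ hs), natDegree_pow] at hdeg
  exact (Nat.dvd_add_left (dvd_mul_right p _)).mp (hdeg ▸ dvd_mul_right p _)

theorem dvd_natDegree_of_pow_eq_algebraMap {K : Type*} [Field K] [Algebra R[X] K]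
    [IsFractionRing R[X] K] {c : R[X]} {d : K} {p : ℕ} (hd : d ^ p = algebraMap R[X] K c)
    (hc : c ≠ 0) : p ∣ c.natDegree := by
  obtain ⟨r, s, hs, rfl⟩ := IsFractionRing.div_surjective (A := R[X]) d
  have hs0 : s ≠ 0 := nonZeroDivisors.ne_zero hs
  have hsK : algebraMap R[X] K s ≠ 0 := IsFractionRing.to_map_ne_zero_of_mem_nonZeroDivisors hs
  refine dvd_natDegree_of_pow_eq_mul_pow (r := r) (IsFractionRing.injective R[X] K ?_) hc hs0
  rw [map_pow, map_mul, map_pow, ← hd, div_pow, div_mul_cancel₀ _ (pow_ne_zero _ hsK)]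

theorem irreducible_X_pow_sub_C_of_odd_of_coprime_natDegree [IsIntegrallyClosed R] {a : ℕ}
    (ha : Odd a) {c : R[X]} (hc : c ≠ 0) (hac : a.Coprime c.natDegree) :
    Irreducible (X ^ a - C c : R[X][X]) := by
  rw [(monic_X_pow_sub_C c ha.pos.ne').irreducible_iff_irreducible_map_fraction_map
    (K := FractionRing R[X]), Polynomial.map_sub, Polynomial.map_pow, map_X, map_C]
  refine X_pow_sub_C_irreducible_of_odd ha fun p hp hpa d hd => hp.one_lt.ne' ?_
  exact Nat.eq_one_of_dvd_coprimes hac hpa (dvd_natDegree_of_pow_eq_algebraMap hd hc)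

end Polynomial

namespace MvPolynomial

variable (R : Type*) [CommSemiring R]

noncomputable def finTwoAlgEquiv : MvPolynomial (Fin 2) R ≃ₐ[R] R[X][X] :=
  (finSuccEquiv R 1).trans (Polynomial.mapAlgEquiv (uniqueAlgEquiv R (Fin 1)))

variable {R}

@[simp]
theorem finTwoAlgEquiv_X_zero : finTwoAlgEquiv R (X 0) = Polynomial.X := by
  rw [finTwoAlgEquiv, AlgEquiv.trans_apply, finSuccEquiv_X_zero, coe_mapAlgEquiv, Polynomial.map_X]

@[simp]
theorem finTwoAlgEquiv_X_one : finTwoAlgEquiv R (X 1) = Polynomial.C Polynomial.X := by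
  rw [finTwoAlgEquiv, AlgEquiv.trans_apply, ← Fin.succ_zero_eq_one, finSuccEquiv_X_succ,
    coe_mapAlgEquiv, Polynomial.map_C]
  exact congrArg Polynomial.C (eval₂_X _ _ _)

@[simp]
theorem finTwoAlgEquiv_C (r : R) : finTwoAlgEquiv R (C r) = Polynomial.C (Polynomial.C r) :=
  (finTwoAlgEquiv R).commutes r

theorem irreducible_X_zero_pow_sub_C_mul_X_one_pow_of_odd {R : Type*} [CommRing R] [IsDomain R]
    [IsIntegrallyClosed R] {a b : ℕ} (ha : Odd a) (hab : a.Coprime b) {lam : R} (hlam : lam ≠ 0) :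
    Irreducible (X 0 ^ a - C lam * X 1 ^ b : MvPolynomial (Fin 2) R) := by
  have hc : (Polynomial.C lam * Polynomial.X ^ b : R[X]) ≠ 0 :=
    mul_ne_zero (by simpa using hlam) (pow_ne_zero _ Polynomial.X_ne_zero)
  have hdeg : (Polynomial.C lam * Polynomial.X ^ b : R[X]).natDegree = b := by
    rw [natDegree_C_mul hlam, natDegree_X_pow]
  rw [← MulEquiv.irreducible_iff (finTwoAlgEquiv R).toMulEquiv]
  convert irreducible_X_pow_sub_C_of_odd_of_coprime_natDegree ha hc (hdeg.symm ▸ hab) using 1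
  simp

theorem associated_X_zero_pow_sub_C_mul_X_one_pow_rename_swap {k : Type*} [Field k] (a b : ℕ)
    {lam : k} (hlam : lam ≠ 0) :
    Associated (X 0 ^ a - C lam * X 1 ^ b : MvPolynomial (Fin 2) k)
      (rename (Equiv.swap 0 1) (X 0 ^ b - C lam⁻¹ * X 1 ^ a)) := by
  refine ⟨(Units.mk0 (-lam⁻¹) (by simpa using hlam)).map C.toMonoidHom, ?_⟩
  simp only [Units.coe_map, Units.val_mk0, RingHom.toMonoidHom_eq_coe, MonoidHom.coe_coe,
    map_sub, map_mul, map_pow, rename_X, rename_C, Equiv.swap_apply_left,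
    Equiv.swap_apply_right, map_neg]
  have hinv : C lam * C lam⁻¹ = (1 : MvPolynomial (Fin 2) k) := by
    rw [← map_mul, mul_inv_cancel₀ hlam, map_one]
  linear_combination X 1 ^ b * hinv

end MvPolynomial

theorem divisor_class_stmt_12_general {k : Type*} [Field k] {a b : ℕ}
    (hab : Nat.Coprime a b) (lam : k) (hlam : lam ≠ 0) :
    Irreducible (MvPolynomial.X 0 ^ a - MvPolynomial.C lam * MvPolynomial.X 1 ^ b :
      MvPolynomial (Fin 2) k) := by
  rcases Nat.even_or_odd a with ha | ha
  · have hb : Odd b := (Nat.Coprime.coprime_dvd_left ha.two_dvd hab).odd_of_left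
    refine (MvPolynomial.associated_X_zero_pow_sub_C_mul_X_one_pow_rename_swap a b
      hlam).symm.irreducible ?_
    exact (MulEquiv.irreducible_iff (MvPolynomial.renameEquiv k (Equiv.swap 0 1)).toMulEquiv).mpr
      (MvPolynomial.irreducible_X_zero_pow_sub_C_mul_X_one_pow_of_odd hb hab.symm
        (inv_ne_zero hlam))
  · exact MvPolynomial.irreducible_X_zero_pow_sub_C_mul_X_one_pow_of_odd ha hab hlam

/-- Let `k` be a field, `a, b` positive integers with `gcd(a,b) = 1`, and
`λ` a nonzero element of `k`.  Then `x₁^a − λ·x₂^b` is irreducible in `k[x₁,x₂]`, realized as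
`MvPolynomial (Fin 2) k`. -/
theorem divisor_class_stmt_12 {k : Type*} [Field k] {a b : ℕ}
    (ha : 0 < a) (hb : 0 < b) (hab : Nat.Coprime a b) (lam : k) (hlam : lam ≠ 0) :
    Irreducible (MvPolynomial.X 0 ^ a - MvPolynomial.C lam * MvPolynomial.X 1 ^ b :
      MvPolynomial (Fin 2) k) :=
  divisor_class_stmt_12_general hab lam hlam
end

section
/- The hypersurface ring ℂ[z,x_1,x_2,x_3]/(z^3 − x_1^3 − x_2^3 − x_3^3) is not a unique factorization domain. -/
/-!
Write `A` for the quotient ring and `ℓ = x₂ + x₃`. Since the cubic is homogeneous, the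
substitution `p(x) ↦ p(t • x)` induces a ring map `A → A[t]` sending a form `p` of degree `d`
to `p tᵈ`; evaluating at `t = 1` recovers the element and at `t = 0` gives a constant. If `A`
is a domain, `t`-degrees add, so in a factorisation of the linear form `ℓ` (sent to `ℓ t`) one
factor has `t`-degree `0`, hence is a nonzero constant: `ℓ` is irreducible. But `ℓ` divides
`x₂³ + x₃³ = z³ - x₁³ = ∏ₖ (z - ωᵏ x₁)` and no factor `z - ωᵏ x₁`, as evaluation at the point
`(ωᵏ⁺¹, 1, 0, 0)` of the hypersurface shows. So `ℓ` is an irreducible element that is not prime.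
-/

open MvPolynomial

namespace MvPolynomial

theorem IsHomogeneous.aeval_mul_left {σ R S : Type*} [CommSemiring R] [CommSemiring S]
    [Algebra R S] {φ : MvPolynomial σ R} {n : ℕ} (hφ : φ.IsHomogeneous n) (t : S) (g : σ → S) :
    MvPolynomial.aeval (fun i => t * g i) φ = t ^ n * MvPolynomial.aeval g φ := by
  simp only [aeval_eq_eval₂Hom, coe_eval₂Hom, eval₂_eq, Finset.mul_sum]
  refine Finset.sum_congr rfl fun d hd => ?_
  have hdeg : ∑ i ∈ d.support, d i = n := by
    rw [← Finsupp.degree_apply, Finsupp.degree_eq_weight_one]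
    exact hφ (mem_support_iff.mp hd)
  rw [← hdeg, ← Finset.prod_pow_eq_pow_sum]
  simp only [mul_pow, Finset.prod_mul_distrib]
  ring

section CommRing

variable {σ R : Type*} [CommRing R]

/-- `p ↦ p(t • x) mod I`, the grading by total degree packaged as a ring map. -/
noncomputable def scaleVars (I : Ideal (MvPolynomial σ R)) :
    MvPolynomial σ R →ₐ[R] Polynomial (MvPolynomial σ R ⧸ I) :=
  aeval fun i => Polynomial.X * Polynomial.C (Ideal.Quotient.mk I (X i))

@[simp]
theorem scaleVars_X (I : Ideal (MvPolynomial σ R)) (i : σ) :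
    scaleVars I (X i) = Polynomial.X * Polynomial.C (Ideal.Quotient.mk I (X i)) :=
  aeval_X _ i

theorem scaleVars_of_isHomogeneous (I : Ideal (MvPolynomial σ R)) {p : MvPolynomial σ R}
    {n : ℕ} (hp : p.IsHomogeneous n) :
    scaleVars I p = Polynomial.X ^ n * Polynomial.C (Ideal.Quotient.mk I p) := by
  rw [scaleVars, hp.aeval_mul_left]
  congr 1
  clear hp
  induction p using MvPolynomial.induction_on with
  | C a =>
    simp only [algHom_C, Polynomial.algebraMap_apply, Polynomial.C_inj]
    exact (Ideal.Quotient.mk_algebraMap R I a).symm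
  | add p q hp hq => simp_all
  | mul_X p i hp => simp_all

variable {s : Set (MvPolynomial σ R)}

noncomputable def quotientScaling (hs : ∀ f ∈ s, ∃ n, f.IsHomogeneous n) :
    MvPolynomial σ R ⧸ Ideal.span s →ₐ[R] Polynomial (MvPolynomial σ R ⧸ Ideal.span s) :=
  Ideal.Quotient.liftₐ _ (scaleVars _) fun _ ha => by
    refine (Ideal.span_le (I := RingHom.ker (scaleVars (Ideal.span s)))).mpr ?_ ha
    intro f hf
    obtain ⟨n, hn⟩ := hs f hf
    rw [SetLike.mem_coe, RingHom.mem_ker, scaleVars_of_isHomogeneous _ hn,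
      Ideal.Quotient.eq_zero_iff_mem.mpr (Ideal.subset_span hf), map_zero, mul_zero]

variable (hs : ∀ f ∈ s, ∃ n, f.IsHomogeneous n)

@[simp]
theorem quotientScaling_mk (p : MvPolynomial σ R) :
    quotientScaling hs (Ideal.Quotient.mk _ p) = scaleVars _ p :=
  rfl

theorem eval_one_quotientScaling (r : MvPolynomial σ R ⧸ Ideal.span s) :
    (quotientScaling hs r).eval 1 = r := by
  obtain ⟨p, rfl⟩ := Ideal.Quotient.mk_surjective r
  induction p using MvPolynomial.induction_on with
  | C a =>
    simp only [quotientScaling_mk, algHom_C, Polynomial.algebraMap_apply, Polynomial.eval_C]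
    exact (Ideal.Quotient.mk_algebraMap R _ a).symm
  | add p q hp hq => simp_all
  | mul_X p i hp => simp_all

theorem eval_zero_quotientScaling (r : MvPolynomial σ R ⧸ Ideal.span s) :
    ∃ c : R, (quotientScaling hs r).eval 0 = algebraMap R _ c := by
  obtain ⟨p, rfl⟩ := Ideal.Quotient.mk_surjective r
  refine ⟨constantCoeff p, ?_⟩
  induction p using MvPolynomial.induction_on with
  | C a => simp
  | add p q hp hq => simp_all
  | mul_X p i hp => simp_all

end CommRing

section Field

variable {σ K : Type*} [Field K] {s : Set (MvPolynomial σ K)}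

theorem isUnit_of_natDegree_quotientScaling_eq_zero (hs : ∀ f ∈ s, ∃ n, f.IsHomogeneous n)
    {r : MvPolynomial σ K ⧸ Ideal.span s} (hr : r ≠ 0)
    (hdeg : (quotientScaling hs r).natDegree = 0) : IsUnit r := by
  obtain ⟨c, hc⟩ := eval_zero_quotientScaling hs r
  have hconst : r = algebraMap K _ c := by
    rw [← eval_one_quotientScaling hs r, ← hc, Polynomial.eq_C_of_natDegree_eq_zero hdeg,
      Polynomial.eval_C, Polynomial.eval_C]
  have hc0 : c ≠ 0 := by
    rintro rfl
    exact hr (by rw [hconst, map_zero])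
  exact hconst ▸ hc0.isUnit.map _

theorem irreducible_mk_of_isHomogeneous_one [IsDomain (MvPolynomial σ K ⧸ Ideal.span s)]
    (hs : ∀ f ∈ s, ∃ n, f.IsHomogeneous n) {p : MvPolynomial σ K} (hp : p.IsHomogeneous 1)
    (hp0 : Ideal.Quotient.mk (Ideal.span s) p ≠ 0) :
    Irreducible (Ideal.Quotient.mk (Ideal.span s) p) := by
  have hdeg : (quotientScaling hs (Ideal.Quotient.mk _ p)).natDegree = 1 := by
    rw [quotientScaling_mk, scaleVars_of_isHomogeneous _ hp, pow_one, Polynomial.X_mul_C,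
      Polynomial.natDegree_C_mul_X _ hp0]
  refine ⟨fun hunit => ?_, fun a b hab => ?_⟩
  · have := Polynomial.natDegree_eq_zero_of_isUnit (hunit.map (quotientScaling hs))
    omega
  · have hne {r} (hr : r ≠ 0) : quotientScaling hs r ≠ 0 := fun h0 => hr <| by
      rw [← eval_one_quotientScaling hs r, h0, Polynomial.eval_zero]
    have ha : a ≠ 0 := left_ne_zero_of_mul (hab ▸ hp0)
    have hb : b ≠ 0 := right_ne_zero_of_mul (hab ▸ hp0)
    rw [hab, map_mul, Polynomial.natDegree_mul (hne ha) (hne hb)] at hdeg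
    rcases Nat.add_eq_one_iff.mp hdeg with ⟨ha0, -⟩ | ⟨-, hb0⟩
    · exact .inl (isUnit_of_natDegree_quotientScaling_eq_zero hs ha ha0)
    · exact .inr (isUnit_of_natDegree_quotientScaling_eq_zero hs hb hb0)

end Field

section Evaluation

variable {σ R : Type*} [CommRing R] {s : Set (MvPolynomial σ R)} {x : σ → R}

noncomputable def quotientEval (hx : ∀ f ∈ s, eval x f = 0) :
    MvPolynomial σ R ⧸ Ideal.span s →+* R :=
  Ideal.Quotient.lift _ (eval x) fun _ ha =>
    (Ideal.span_le (I := RingHom.ker (eval x))).mpr (fun f hf => hx f hf) ha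

theorem mk_ne_zero_of_eval_ne_zero (hx : ∀ f ∈ s, eval x f = 0) {q : MvPolynomial σ R}
    (hq : eval x q ≠ 0) : Ideal.Quotient.mk (Ideal.span s) q ≠ 0 := fun h0 =>
  hq <| (congrArg (quotientEval hx) h0).trans (map_zero _)

theorem not_mk_dvd_mk_of_eval (hx : ∀ f ∈ s, eval x f = 0) {p q : MvPolynomial σ R}
    (hp : eval x p = 0) (hq : eval x q ≠ 0) :
    ¬ Ideal.Quotient.mk (Ideal.span s) p ∣ Ideal.Quotient.mk (Ideal.span s) q := fun hdvd =>
  hq <| zero_dvd_iff.mp (hp ▸ map_dvd (quotientEval hx) hdvd)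

end Evaluation

end MvPolynomial

theorem pow_three_sub_pow_three_eq_prod {R : Type*} [CommRing R] {ω : R}
    (hω : ω ^ 2 + ω + 1 = 0) (x y : R) :
    x ^ 3 - y ^ 3 = ∏ k ∈ Finset.range 3, (x - ω ^ k * y) := by
  simp only [Finset.prod_range_succ, Finset.prod_range_zero]
  linear_combination (x ^ 2 * y - ω * x * y ^ 2 + (ω - 1) * y ^ 3) * hω

noncomputable abbrev fermatCubic : MvPolynomial (Fin 4) ℂ := X 0 ^ 3 - X 1 ^ 3 - X 2 ^ 3 - X 3 ^ 3

theorem not_prime_mk_X_add_X :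
    ¬ Prime (Ideal.Quotient.mk (Ideal.span {fermatCubic}) (X 2 + X 3)) := by
  intro hprime
  obtain ⟨ω, hω⟩ : ∃ ω : ℂ, IsPrimitiveRoot ω 3 := ⟨_, Complex.isPrimitiveRoot_exp 3 (by norm_num)⟩
  have hω2 : ω ^ 2 + ω + 1 = 0 := by
    have := hω.geom_sum_eq_zero (by norm_num)
    simp only [Finset.sum_range_succ, Finset.sum_range_zero] at this
    linear_combination this
  have hdvd : Ideal.Quotient.mk (Ideal.span {fermatCubic}) (X 2 + X 3) ∣
      ∏ k ∈ Finset.range 3, Ideal.Quotient.mk _ (X 0 - C ω ^ k * X 1) := by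
    have hcube : Ideal.Quotient.mk (Ideal.span {fermatCubic}) (X 0 ^ 3 - X 1 ^ 3) =
        Ideal.Quotient.mk _ (X 2 ^ 3 + X 3 ^ 3) :=
      Ideal.Quotient.eq.mpr (Ideal.mem_span_singleton.mpr (dvd_of_eq (by unfold fermatCubic; ring)))
    rw [← map_prod, ← pow_three_sub_pow_three_eq_prod (by simpa using congrArg C hω2), hcube]
    exact map_dvd _ (Odd.add_dvd_pow_add_pow _ _ (by decide))
  obtain ⟨k, -, hk⟩ := hprime.exists_mem_finset_dvd hdvd
  refine not_mk_dvd_mk_of_eval (x := ![ω ^ (k + 1), 1, 0, 0]) ?_ (by simp) ?_ hk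
  · have hcube : (ω ^ (k + 1)) ^ 3 = 1 := by
      rw [← pow_mul, mul_comm, pow_mul, hω.pow_eq_one, one_pow]
    simp [hcube]
  · simp [pow_succ, ← mul_sub_one, hω.ne_zero (by norm_num), hω.ne_one (by norm_num), sub_eq_zero]

theorem irreducible_mk_X_add_X [IsDomain (MvPolynomial (Fin 4) ℂ ⧸ Ideal.span {fermatCubic})] :
    Irreducible (Ideal.Quotient.mk (Ideal.span {fermatCubic}) (X 2 + X 3)) := by
  refine irreducible_mk_of_isHomogeneous_one ?_ ((isHomogeneous_X _ _).add (isHomogeneous_X _ _))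
    (mk_ne_zero_of_eval_ne_zero (x := ![(1 : ℂ), 0, 1, 0]) ?_ (by simp))
  · rintro f rfl
    exact ⟨3, (((isHomogeneous_X_pow _ 3).sub (isHomogeneous_X_pow _ 3)).sub
      (isHomogeneous_X_pow _ 3)).sub (isHomogeneous_X_pow _ 3)⟩
  · simp

/-- The hypersurface ring `ℂ[z,x₁,x₂,x₃]/(z³ − x₁³ − x₂³ − x₃³)` is not a
unique factorization domain, i.e. it is not an integral domain with unique factorization.
Here the polynomial ring in the four variables `z, x₁, x₂, x₃` is realized as
`MvPolynomial (Fin 4) ℂ`, with `z` the variable of index `0`. -/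
theorem divisor_class_stmt_17 :
    ¬ ∃ hdom : IsDomain (MvPolynomial (Fin 4) ℂ ⧸
        Ideal.span {(MvPolynomial.X 0 ^ 3 - MvPolynomial.X 1 ^ 3 - MvPolynomial.X 2 ^ 3 -
          MvPolynomial.X 3 ^ 3 : MvPolynomial (Fin 4) ℂ)}),
      letI := hdom
      UniqueFactorizationMonoid (MvPolynomial (Fin 4) ℂ ⧸
        Ideal.span {(MvPolynomial.X 0 ^ 3 - MvPolynomial.X 1 ^ 3 - MvPolynomial.X 2 ^ 3 -
          MvPolynomial.X 3 ^ 3 : MvPolynomial (Fin 4) ℂ)}) := by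
  rintro ⟨hdom, hufd⟩
  exact not_prime_mk_X_add_X
    (UniqueFactorizationMonoid.irreducible_iff_prime.mp irreducible_mk_X_add_X)
end
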